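/- arXiv:1412.5071 — 6 statements merged into one kernel-verified Lean document; each statement's English description precedes it below -/
import Mathlib

section
/- Let q be a prime power, b a positive integer, and let A = ⊕_i ⊕_j J_{f_i^{e_{i,j}}} ∈ F_q^{n×n} be a block-diagonal matrix, where the f_i ∈ F_q[x] are distinct monic irreducible polynomials, the e_{i,j} are positive integers nonincreasing in j, and J_{f^e} denotes the Jordan block of f^e. Then P(A) = Π_i P(⊕_j J_{f_i^{e_{i,j}}}), where P of each matrix is computed with the same block size b and each ⊕_j J_{f_i^{e_{i,j}}} is viewed as a square matrix of its own dimension. -/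
open Matrix Polynomial

/-- `p` annihilates the matrix sequence `S`, i.e. `p(S) = 0`:
for every `k`, `∑ i, (coeff p i) • S (i + k) = 0`. -/
def AnnPoly {F : Type} [Field F] {α β : Type} (p : Polynomial F)
    (S : ℕ → Matrix α β F) : Prop :=
  ∀ k : ℕ, (p.sum fun i a => a • S (i + k)) = 0

open scoped Classical in
/-- The minimal generating polynomial of a matrix sequence: the unique monic
polynomial annihilating `S` that divides every annihilator of `S`
(`0` if no such polynomial exists). -/
noncomputable def seqMinpoly {F : Type} [Field F] {α β : Type}
    (S : ℕ → Matrix α β F) : Polynomial F :=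
  if h : ∃ p : Polynomial F, p.Monic ∧ AnnPoly p S ∧ ∀ g : Polynomial F, AnnPoly g S → p ∣ g
  then h.choose else 0

/-- `pmp F b A` : the fraction of pairs `(U, V)` for which the projected sequence
`(U * A^k * V)_k` has the same minimal polynomial as the sequence `(A^k)_k`. -/
noncomputable def pmp (F : Type) [Field F] [Fintype F] (b : ℕ)
    {ι : Type} [Fintype ι] [DecidableEq ι] (A : Matrix ι ι F) : ℚ :=
  (Nat.card {UV : Matrix (Fin b) ι F × Matrix ι (Fin b) F //
      seqMinpoly (fun k => UV.1 * A ^ k * UV.2) = seqMinpoly (fun k => A ^ k)} : ℚ) /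
  (Nat.card (Matrix (Fin b) ι F × Matrix ι (Fin b) F) : ℚ)

/-- The companion matrix of a monic polynomial `f` of degree `d`:
ones on the subdiagonal, last column `(-f_0, …, -f_{d-1})ᵀ`. -/
def companion {F : Type} [Field F] (d : ℕ) (f : Polynomial F) :
    Matrix (Fin d) (Fin d) F :=
  Matrix.of fun i j => (if (i : ℕ) = (j : ℕ) + 1 then 1 else 0) +
    (if (j : ℕ) = d - 1 then -f.coeff (i : ℕ) else 0)

/-- The Jordan block `J_{f^e}` of `f^e` (`f` of degree `d`): `e` diagonal blocks `C_f`
and identity blocks on the first block subdiagonal. -/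
def jordanBlock {F : Type} [Field F] (d e : ℕ) (f : Polynomial F) :
    Matrix (Fin e × Fin d) (Fin e × Fin d) F :=
  Matrix.of fun p q =>
    if p.1 = q.1 then companion d f p.2 q.2
    else if (p.1 : ℕ) = (q.1 : ℕ) + 1 then (if p.2 = q.2 then 1 else 0) else 0

/-!
Write `A = ⊕ᵢ Aᵢ` with `Aᵢ = ⊕ⱼ J_{fᵢ^{e_{i,j}}}`. Since `J_{f^e} = I ⊗ C_f + N ⊗ I` with
commuting summands, `f(C_f) = 0` and `N` nilpotent, `fᵢ(Aᵢ)` is nilpotent; hence the minimal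
polynomials of the `Aᵢ` are pairwise coprime and `minpoly A = ∏ᵢ minpoly Aᵢ`.
Splitting `U` and `V` into blocks, the projected sequence is `∑ᵢ Uᵢ Āᵢ Vᵢ`. The minimal
polynomial of the `i`-th summand divides `minpoly Aᵢ`, so by coprimality the minimal polynomial
of the sum is the product of those of the summands, and it equals `∏ᵢ minpoly Aᵢ` iff every
factor does. So the good pairs `(U, V)` are exactly the tuples of good pairs `(Uᵢ, Vᵢ)`, and
the proportions multiply.
-/

section MatrixSequence
variable {F : Type} [Field F] {α β : Type}

def seqShift : Module.End F (ℕ → Matrix α β F) := LinearMap.funLeft F _ (· + 1)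

theorem seqShift_pow_apply (n : ℕ) (S : ℕ → Matrix α β F) (k : ℕ) :
    (seqShift ^ n) S k = S (n + k) := by
  induction n generalizing S with
  | zero => simp
  | succ n ih =>
    rw [pow_succ, Module.End.mul_apply, ih, add_right_comm]
    rfl

theorem aeval_seqShift_apply (p : F[X]) (S : ℕ → Matrix α β F) (k : ℕ) :
    aeval seqShift p S k = p.sum fun i a => a • S (i + k) := by
  simp only [aeval_def, eval₂_eq_sum, Polynomial.sum_def, LinearMap.sum_apply,
    Finset.sum_apply, Module.End.mul_apply, Module.algebraMap_end_apply, Pi.smul_apply,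
    seqShift_pow_apply]

theorem annPoly_iff_aeval_seqShift {p : F[X]} {S : ℕ → Matrix α β F} :
    AnnPoly p S ↔ aeval seqShift p S = 0 := by
  simp only [AnnPoly, funext_iff, aeval_seqShift_apply, Pi.zero_apply]

def seqAnnIdeal (S : ℕ → Matrix α β F) : Ideal F[X] where
  carrier := {p | AnnPoly p S}
  add_mem' hp hq := by
    simp_all only [Set.mem_ofPred_eq, annPoly_iff_aeval_seqShift, map_add, LinearMap.add_apply,
      add_zero]
  zero_mem' := annPoly_iff_aeval_seqShift.2 (by simp)
  smul_mem' c p hp := by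
    simp_all only [Set.mem_ofPred_eq, annPoly_iff_aeval_seqShift, smul_eq_mul, map_mul,
      Module.End.mul_apply, map_zero]

theorem AnnPoly.dvd {p g : F[X]} {S : ℕ → Matrix α β F} (hp : AnnPoly p S) (hpg : p ∣ g) :
    AnnPoly g S :=
  (seqAnnIdeal S).mem_of_dvd hpg hp

theorem AnnPoly.mul_mul {γ δ : Type} [Fintype α] [Fintype β] {S : ℕ → Matrix α β F}
    {p : F[X]} (U : Matrix γ α F) (V : Matrix β δ F) (h : AnnPoly p S) :
    AnnPoly p (fun k => U * S k * V) := by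
  intro k
  have hUV : (p.sum fun i a => a • (U * S (i + k) * V)) =
      U * (p.sum fun i a => a • S (i + k)) * V := by
    simp only [Polynomial.sum_def, Matrix.mul_sum, Matrix.sum_mul, Matrix.mul_smul,
      Matrix.smul_mul]
  rw [hUV, h k, Matrix.mul_zero, Matrix.zero_mul]

structure IsSeqMinpoly (m : F[X]) (S : ℕ → Matrix α β F) : Prop where
  monic : m.Monic
  annPoly : AnnPoly m S
  dvd : ∀ g, AnnPoly g S → m ∣ g

theorem IsSeqMinpoly.seqMinpoly_eq {S : ℕ → Matrix α β F} {m : F[X]} (h : IsSeqMinpoly m S) :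
    seqMinpoly S = m := by
  classical
  have hex : ∃ p : F[X], p.Monic ∧ AnnPoly p S ∧ ∀ g, AnnPoly g S → p ∣ g :=
    ⟨m, h.monic, h.annPoly, h.dvd⟩
  rw [seqMinpoly, dif_pos hex]
  obtain ⟨hmon, hann, hdvd⟩ := hex.choose_spec
  exact eq_of_monic_of_associated hmon h.monic
    (associated_of_dvd_dvd (hdvd m h.annPoly) (h.dvd _ hann))

theorem isSeqMinpoly_seqMinpoly {S : ℕ → Matrix α β F} {p : F[X]} (hp : p ≠ 0)
    (hann : AnnPoly p S) : IsSeqMinpoly (seqMinpoly S) S := by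
  classical
  obtain ⟨g, hg⟩ := (IsPrincipalIdealRing.principal (seqAnnIdeal S)).principal
  have mem : ∀ q, AnnPoly q S ↔ g ∣ q := fun q => by
    rw [← Ideal.mem_span_singleton, ← Ideal.submodule_span_eq, ← hg]; rfl
  have hg0 : g ≠ 0 := by rintro rfl; exact hp (zero_dvd_iff.1 ((mem p).1 hann))
  have h : IsSeqMinpoly (normalize g) S := ⟨monic_normalize hg0,
    (mem _).2 (dvd_normalize_iff.2 dvd_rfl), fun g' h => normalize_dvd_iff.2 ((mem g').1 h)⟩
  rwa [h.seqMinpoly_eq]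

theorem IsSeqMinpoly.sum {γ : Type} [Fintype γ] [DecidableEq γ] {T : γ → ℕ → Matrix α β F}
    {m : γ → F[X]} (hm : ∀ i, IsSeqMinpoly (m i) (T i))
    (hcop : Pairwise fun i j => IsCoprime (m i) (m j)) :
    IsSeqMinpoly (∏ i, m i) (∑ i, T i) := by
  have hkill : ∀ i {r : F[X]}, m i ∣ r → aeval seqShift r (T i) = 0 := fun i _ hr =>
    annPoly_iff_aeval_seqShift.1 ((hm i).annPoly.dvd hr)
  refine ⟨monic_prod_of_monic _ _ fun i _ => (hm i).monic, ?_, fun g hg => ?_⟩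
  · rw [annPoly_iff_aeval_seqShift, map_sum]
    exact Finset.sum_eq_zero fun i hi => hkill i (Finset.dvd_prod_of_mem m hi)
  refine Finset.prod_dvd_of_coprime (fun i _ j _ hij => hcop hij) fun j _ => ?_
  set r := ∏ i ∈ Finset.univ.erase j, m i
  have hr : aeval seqShift r (∑ i, T i) = aeval seqShift r (T j) := by
    rw [map_sum]
    refine Finset.sum_eq_single j (fun i _ hij => hkill i ?_) (by simp)
    exact Finset.dvd_prod_of_mem m (Finset.mem_erase.2 ⟨hij, Finset.mem_univ i⟩)
  have hgr : AnnPoly (g * r) (T j) := by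
    rw [annPoly_iff_aeval_seqShift]
    calc aeval seqShift (g * r) (T j) = aeval seqShift r (aeval seqShift g (∑ i, T i)) := by
          rw [map_mul, Module.End.mul_apply, ← hr, ← Module.End.mul_apply, ← map_mul, mul_comm,
            map_mul, Module.End.mul_apply]
      _ = 0 := by rw [annPoly_iff_aeval_seqShift.1 hg, map_zero]
  have hcop_r : IsCoprime (m j) r :=
    IsCoprime.prod_right fun i hi => hcop (Finset.ne_of_mem_erase hi).symm
  exact hcop_r.dvd_of_dvd_mul_right ((hm j).dvd _ hgr)

theorem annPoly_pow_iff {ι : Type} [Fintype ι] [DecidableEq ι] {M : Matrix ι ι F} {p : F[X]} :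
    AnnPoly p (fun k => M ^ k) ↔ aeval M p = 0 := by
  have h : ∀ k, (p.sum fun i a => a • M ^ (i + k)) = aeval M p * M ^ k := fun k => by
    simp only [aeval_def, eval₂_eq_sum, Polynomial.sum_def, Finset.sum_mul, pow_add,
      Algebra.smul_def, mul_assoc]
  simp only [AnnPoly, h]
  exact ⟨fun h0 => by simpa using h0 0, fun h0 k => by rw [h0, zero_mul]⟩

theorem isSeqMinpoly_pow_minpoly {ι : Type} [Fintype ι] [DecidableEq ι] (M : Matrix ι ι F) :
    IsSeqMinpoly (minpoly F M) (fun k => M ^ k) :=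
  ⟨minpoly.monic (Matrix.isIntegral M), annPoly_pow_iff.2 (minpoly.aeval F M),
    fun _ hg => minpoly.dvd F M (annPoly_pow_iff.1 hg)⟩

end MatrixSequence

theorem prod_eq_prod_iff_of_monic_of_dvd {F : Type} [Field F] {ι : Type} [Fintype ι]
    {a b : ι → F[X]} (ha : ∀ i, (a i).Monic) (hb : ∀ i, (b i).Monic) (hab : ∀ i, a i ∣ b i) :
    ∏ i, a i = ∏ i, b i ↔ ∀ i, a i = b i := by
  refine ⟨fun h i => ?_, fun h => Finset.prod_congr rfl fun i _ => h i⟩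
  choose c hc using hab
  have hc1 : ∏ i, c i = 1 := by
    rw [funext hc, Finset.prod_mul_distrib] at h
    exact (mul_eq_left₀ (monic_prod_of_monic _ _ fun i _ => ha i).ne_zero).1 h.symm
  have hunit : IsUnit (c i) :=
    isUnit_of_dvd_one (hc1 ▸ Finset.dvd_prod_of_mem c (Finset.mem_univ i))
  exact eq_of_monic_of_associated (ha i) (hb i) ⟨hunit.unit, (hc i).symm⟩

theorem natCard_subtype_div_natCard_eq_prod {ι : Type} [Fintype ι] {X : Type} {Y : ι → Type}
    (E : X ≃ ∀ i, Y i) {P : X → Prop} {Q : ∀ i, Y i → Prop} (h : ∀ x, P x ↔ ∀ i, Q i (E x i)) :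
    (Nat.card {x // P x} : ℚ) / Nat.card X =
      ∏ i, (Nat.card {y // Q i y} : ℚ) / Nat.card (Y i) := by
  rw [Nat.card_congr ((E.subtypeEquiv h).trans Equiv.subtypePiEquivPi), Nat.card_congr E,
    Nat.card_pi, Nat.card_pi, Nat.cast_prod, Nat.cast_prod, Finset.prod_div_distrib]

section BlockDiagonal
variable {ι : Type} {κ : ι → Type}

def sigmaBlocksEquiv (R m n : Type) :
    Matrix m (Σ i, κ i) R × Matrix (Σ i, κ i) n R ≃ ∀ i, Matrix m (κ i) R × Matrix (κ i) n R where
  toFun UV i := (UV.1.submatrix id (Sigma.mk i), UV.2.submatrix (Sigma.mk i) id)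
  invFun W := (Matrix.of fun r x => (W x.1).1 r x.2, Matrix.of fun x c => (W x.1).2 x.2 c)
  left_inv _ := rfl
  right_inv _ := rfl

variable {R : Type} [CommSemiring R] [Fintype ι] [DecidableEq ι] [∀ i, Fintype (κ i)]

theorem mul_blockDiagonal'_mul {m n : Type} (U : Matrix m (Σ i, κ i) R)
    (M : ∀ i, Matrix (κ i) (κ i) R) (V : Matrix (Σ i, κ i) n R) :
    U * blockDiagonal' M * V =
      ∑ i, U.submatrix id (Sigma.mk i) * M i * V.submatrix (Sigma.mk i) id := by
  ext r c
  simp [Matrix.mul_apply, Matrix.sum_apply, Fintype.sum_sigma, blockDiagonal'_apply,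
    Finset.sum_mul]

variable [∀ i, DecidableEq (κ i)]

theorem aeval_blockDiagonal' (M : ∀ i, Matrix (κ i) (κ i) R) (p : R[X]) :
    aeval (blockDiagonal' M) p = blockDiagonal' fun i => aeval (M i) p := by
  induction p using Polynomial.induction_on' with
  | add p q hp hq =>
    rw [map_add, hp, hq, ← blockDiagonal'_add]
    exact congrArg blockDiagonal' (funext fun i => (map_add _ p q).symm)
  | monomial n a =>
    simp only [aeval_monomial, ← Algebra.smul_def, ← blockDiagonal'_pow, ← blockDiagonal'_smul]
    rfl

theorem isNilpotent_blockDiagonal' {M : ∀ i, Matrix (κ i) (κ i) R}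
    (h : ∀ i, IsNilpotent (M i)) : IsNilpotent (blockDiagonal' M) := by
  choose n hn using h
  refine ⟨∑ i, n i, ?_⟩
  rw [← blockDiagonal'_pow, ← blockDiagonal'_zero]
  congr 1
  funext i
  exact pow_eq_zero_of_le (Finset.single_le_sum (fun _ _ => Nat.zero_le _) (Finset.mem_univ i))
    (hn i)

variable {F : Type} [Field F]

theorem minpoly_blockDiagonal' {A : ∀ i, Matrix (κ i) (κ i) F}
    (hcop : Pairwise fun i j => IsCoprime (minpoly F (A i)) (minpoly F (A j))) :
    minpoly F (blockDiagonal' A) = ∏ i, minpoly F (A i) := by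
  have hzero : ∀ {p : F[X]}, aeval (blockDiagonal' A) p = 0 ↔ ∀ i, aeval (A i) p = 0 := by
    intro p
    rw [aeval_blockDiagonal', ← blockDiagonal'_zero, blockDiagonal'_inj, funext_iff]
    rfl
  refine eq_of_monic_of_associated (minpoly.monic (Matrix.isIntegral _))
    (monic_prod_of_monic _ _ fun i _ => minpoly.monic (Matrix.isIntegral _))
    (associated_of_dvd_dvd (minpoly.dvd _ _ (hzero.2 fun i => ?_)) ?_)
  · exact minpoly.dvd_iff.1 (Finset.dvd_prod_of_mem _ (Finset.mem_univ i))
  · exact Finset.prod_dvd_of_coprime (fun i _ j _ hij => hcop hij)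
      fun i _ => minpoly.dvd _ _ (hzero.1 (minpoly.aeval _ _) i)

theorem seqMinpoly_mul_blockDiagonal'_pow_mul_eq_iff {m n : Type}
    {A : ∀ i, Matrix (κ i) (κ i) F}
    (hcop : Pairwise fun i j => IsCoprime (minpoly F (A i)) (minpoly F (A j)))
    (U : Matrix m (Σ i, κ i) F) (V : Matrix (Σ i, κ i) n F) :
    seqMinpoly (fun k => U * blockDiagonal' A ^ k * V) = seqMinpoly (fun k => blockDiagonal' A ^ k)
      ↔ ∀ i, seqMinpoly (fun k => U.submatrix id (Sigma.mk i) * A i ^ k *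
          V.submatrix (Sigma.mk i) id) = seqMinpoly (fun k => A i ^ k) := by
  set T : ι → ℕ → Matrix m n F := fun i k =>
    U.submatrix id (Sigma.mk i) * A i ^ k * V.submatrix (Sigma.mk i) id
  have hann : ∀ i, AnnPoly (minpoly F (A i)) (T i) := fun i =>
    (isSeqMinpoly_pow_minpoly (A i)).annPoly.mul_mul _ _
  have hT : ∀ i, IsSeqMinpoly (seqMinpoly (T i)) (T i) := fun i =>
    isSeqMinpoly_seqMinpoly (minpoly.ne_zero (Matrix.isIntegral _)) (hann i)
  have hdvd : ∀ i, seqMinpoly (T i) ∣ minpoly F (A i) := fun i => (hT i).dvd _ (hann i)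
  have hsum : (fun k => U * blockDiagonal' A ^ k * V) = ∑ i, T i := by
    funext k
    rw [← blockDiagonal'_pow, mul_blockDiagonal'_mul, Finset.sum_apply]
    rfl
  have hsum_min := IsSeqMinpoly.sum hT fun i j hij =>
    ((hcop hij).of_isCoprime_of_dvd_left (hdvd i)).of_isCoprime_of_dvd_right (hdvd j)
  simp only [hsum, hsum_min.seqMinpoly_eq, (isSeqMinpoly_pow_minpoly _).seqMinpoly_eq,
    minpoly_blockDiagonal' hcop]
  exact prod_eq_prod_iff_of_monic_of_dvd (fun i => (hT i).monic)
    (fun i => minpoly.monic (Matrix.isIntegral _)) hdvd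

theorem pmp_blockDiagonal' [Fintype F] (b : ℕ) {A : ∀ i, Matrix (κ i) (κ i) F}
    (hcop : Pairwise fun i j => IsCoprime (minpoly F (A i)) (minpoly F (A j))) :
    pmp F b (blockDiagonal' A) = ∏ i, pmp F b (A i) :=
  natCard_subtype_div_natCard_eq_prod (sigmaBlocksEquiv _ _ _) fun UV =>
    seqMinpoly_mul_blockDiagonal'_pow_mul_eq_iff hcop UV.1 UV.2

end BlockDiagonal

theorem IsCoprime.minpoly_of_isNilpotent_aeval {F A B : Type} [Field F] [Ring A] [Algebra F A]
    [Ring B] [Algebra F B] {f g : F[X]} (hfg : IsCoprime f g) {x : A} {y : B}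
    (hx : IsNilpotent (aeval x f)) (hy : IsNilpotent (aeval y g)) :
    IsCoprime (minpoly F x) (minpoly F y) := by
  obtain ⟨n, hn⟩ := hx
  obtain ⟨m, hm⟩ := hy
  exact ((hfg.pow (m := n) (n := m)).of_isCoprime_of_dvd_left
    (minpoly.dvd F x (by rw [map_pow, hn]))).of_isCoprime_of_dvd_right
    (minpoly.dvd F y (by rw [map_pow, hm]))

theorem isCoprime_of_monic_of_irreducible_of_ne {F : Type} [Field F] {f g : F[X]}
    (hf : f.Monic) (hg : g.Monic) (hfi : Irreducible f) (hgi : Irreducible g) (hne : f ≠ g) :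
    IsCoprime f g := by
  rw [hfi.coprime_iff_not_dvd]
  exact fun h => hne (eq_of_monic_of_associated hf hg (hfi.associated_of_dvd hgi h))

open scoped IsMulCommutative in
theorem isNilpotent_aeval_add_sub_aeval {R A : Type} [CommRing R] [Ring A] [Algebra R A]
    {x y : A} (hxy : Commute x y) (hy : IsNilpotent y) (p : R[X]) :
    IsNilpotent (aeval (x + y) p - aeval x p) := by
  let S := Algebra.adjoin R {x, y}
  have : IsMulCommutative S := Algebra.isMulCommutative_adjoin R <| by
    simp only [Set.mem_insert_iff, Set.mem_singleton_iff]
    rintro a (rfl | rfl) b (rfl | rfl) <;> first | rfl | exact hxy | exact hxy.symm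
  let x' : S := ⟨x, Algebra.subset_adjoin (by simp)⟩
  let y' : S := ⟨y, Algebra.subset_adjoin (by simp)⟩
  have hy' : IsNilpotent y' := by
    obtain ⟨n, hn⟩ := hy
    exact ⟨n, Subtype.ext (by simpa using hn)⟩
  have := (isNilpotent_aeval_sub_of_isNilpotent_sub p (a := x' + y') (b := x')
    (by rwa [add_sub_cancel_left])).map S.val
  simp only [map_sub, Subalgebra.coe_val, aeval_subalgebra_coe, Subalgebra.coe_add] at this
  exact this

section Companion
variable {F : Type} [Field F] (f : F[X])

theorem companion_mulVec_single_of_lt (j : Fin f.natDegree) (h : (j : ℕ) + 1 < f.natDegree) :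
    companion f.natDegree f *ᵥ Pi.single j 1 = Pi.single ⟨j + 1, h⟩ 1 := by
  have hj : (j : ℕ) ≠ f.natDegree - 1 := by omega
  ext i
  simp [companion, Pi.single_apply, Fin.ext_iff, hj]

theorem companion_mulVec_single_last (hd : 0 < f.natDegree) :
    companion f.natDegree f *ᵥ Pi.single ⟨f.natDegree - 1, by omega⟩ 1 =
      fun i : Fin f.natDegree => -f.coeff i := by
  ext i
  have hi : (i : ℕ) ≠ f.natDegree - 1 + 1 := by omega
  simp [companion, hi]

theorem companion_pow_mulVec_single_zero (hd : 0 < f.natDegree) (k : ℕ) (hk : k < f.natDegree) :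
    companion f.natDegree f ^ k *ᵥ Pi.single ⟨0, hd⟩ 1 = Pi.single ⟨k, hk⟩ 1 := by
  induction k with
  | zero => rw [pow_zero, Matrix.one_mulVec]
  | succ k ih =>
    rw [pow_succ', ← Matrix.mulVec_mulVec, ih (by omega), companion_mulVec_single_of_lt]

/-- The basis vector `e₀` is cyclic for `C_f` and killed by `f(C_f)`, which commutes with `C_f`. -/
theorem aeval_companion_self (hf : f.Monic) (hd : 0 < f.natDegree) :
    aeval (companion f.natDegree f) f = 0 := by
  set C := companion f.natDegree f
  set e₀ : Fin f.natDegree → F := Pi.single ⟨0, hd⟩ 1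
  have hC : ∀ k (hk : k < f.natDegree), C ^ k *ᵥ e₀ = Pi.single ⟨k, hk⟩ 1 :=
    companion_pow_mulVec_single_zero f hd
  have hlow : ∑ k ∈ Finset.range f.natDegree, f.coeff k • (C ^ k *ᵥ e₀) =
      fun i : Fin f.natDegree => f.coeff i := by
    rw [← Fin.sum_univ_eq_sum_range (fun k => f.coeff k • (C ^ k *ᵥ e₀))]
    conv_rhs => rw [← Finset.univ_sum_single (fun i : Fin f.natDegree => f.coeff i)]
    refine Finset.sum_congr rfl fun k _ => ?_
    rw [hC k k.isLt, ← Pi.single_smul', smul_eq_mul, mul_one]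
  have htop : C ^ f.natDegree *ᵥ e₀ = fun i : Fin f.natDegree => -f.coeff i := by
    rw [← mul_pow_sub_one hd.ne', ← Matrix.mulVec_mulVec, hC _ (by omega)]
    exact companion_mulVec_single_last f hd
  have he₀ : aeval C f *ᵥ e₀ = 0 := by
    rw [aeval_eq_sum_range, Finset.sum_range_succ, Matrix.add_mulVec, Matrix.sum_mulVec]
    simp only [Matrix.smul_mulVec, hlow, htop, hf.coeff_natDegree, one_smul]
    ext i
    simp
  refine Matrix.ext_of_mulVec_single fun j => ?_
  rw [← Fin.eta j j.isLt, ← hC j j.isLt, Matrix.mulVec_mulVec, ← aeval_X_pow (R := F),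
    ← map_mul, mul_comm, map_mul, aeval_X_pow, ← Matrix.mulVec_mulVec, he₀, Matrix.mulVec_zero,
    Matrix.zero_mulVec]

end Companion

section Jordan
open scoped Kronecker
variable {F : Type} [Field F]

def lowerShift (e : ℕ) : Matrix (Fin e) (Fin e) F :=
  Matrix.of fun i j => if (i : ℕ) = j + 1 then 1 else 0

theorem pow_eq_zero_of_forall_le_apply_eq_zero {e : ℕ} {M : Matrix (Fin e) (Fin e) F}
    (h : ∀ i j, i ≤ j → M i j = 0) : M ^ e = 0 := by
  have key : ∀ m (i j : Fin e), (i : ℕ) < j + m → (M ^ m) i j = 0 := by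
    intro m
    induction m with
    | zero => exact fun i j hij => Matrix.one_apply_ne (by rintro rfl; omega)
    | succ m ih =>
      intro i j hij
      rw [pow_succ, Matrix.mul_apply]
      refine Finset.sum_eq_zero fun l _ => ?_
      by_cases hl : (i : ℕ) < l + m
      · rw [ih i l hl, zero_mul]
      · rw [h l j (by rw [Fin.le_def]; omega), mul_zero]
  ext i j
  exact key e i j (by omega)

theorem isNilpotent_lowerShift (e : ℕ) : IsNilpotent (lowerShift e : Matrix _ _ F) :=
  ⟨e, pow_eq_zero_of_forall_le_apply_eq_zero fun i j hij => by
    simp only [lowerShift, Matrix.of_apply, ite_eq_right_iff]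
    rw [Fin.le_def] at hij
    omega⟩

section Kronecker
variable {m n : Type} [Fintype m] [DecidableEq m] [Fintype n] [DecidableEq n]

theorem one_kronecker_pow (A : Matrix n n F) (k : ℕ) :
    ((1 : Matrix m m F) ⊗ₖ A) ^ k = 1 ⊗ₖ (A ^ k) := by
  induction k with
  | zero => simp
  | succ k ih => rw [pow_succ, ih, ← mul_kronecker_mul, mul_one, pow_succ]

theorem kronecker_one_pow (A : Matrix m m F) (k : ℕ) :
    (A ⊗ₖ (1 : Matrix n n F)) ^ k = (A ^ k) ⊗ₖ 1 := by
  induction k with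
  | zero => simp
  | succ k ih => rw [pow_succ, ih, ← mul_kronecker_mul, mul_one, pow_succ]

theorem aeval_one_kronecker (A : Matrix n n F) (p : F[X]) :
    aeval ((1 : Matrix m m F) ⊗ₖ A) p = 1 ⊗ₖ aeval A p := by
  induction p using Polynomial.induction_on' with
  | add p q hp hq => rw [map_add, map_add, hp, hq, kronecker_add]
  | monomial k a =>
    rw [aeval_monomial, aeval_monomial, ← Algebra.smul_def, ← Algebra.smul_def,
      one_kronecker_pow, kronecker_smul]

end Kronecker

theorem jordanBlock_eq_kronecker (d e : ℕ) (f : F[X]) :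
    jordanBlock d e f = 1 ⊗ₖ companion d f + lowerShift e ⊗ₖ 1 := by
  ext ⟨i, k⟩ ⟨j, l⟩
  by_cases hij : i = j
  · subst hij
    simp [jordanBlock, lowerShift]
  · simp only [jordanBlock, lowerShift, Matrix.add_apply, kronecker_apply, Matrix.of_apply,
      Matrix.one_apply, if_neg hij]
    split_ifs <;> simp

theorem isNilpotent_aeval_jordanBlock {f : F[X]} (hf : f.Monic) (hd : 0 < f.natDegree) (e : ℕ) :
    IsNilpotent (aeval (jordanBlock f.natDegree e f) f) := by
  have hcomm : Commute ((1 : Matrix (Fin e) (Fin e) F) ⊗ₖ companion f.natDegree f)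
      (lowerShift e ⊗ₖ 1) := by
    simp only [Commute, SemiconjBy, ← mul_kronecker_mul, mul_one, one_mul]
  have hnil : IsNilpotent
      (lowerShift e ⊗ₖ (1 : Matrix (Fin f.natDegree) (Fin f.natDegree) F)) := by
    obtain ⟨n, hn⟩ := isNilpotent_lowerShift (F := F) e
    exact ⟨n, by rw [kronecker_one_pow, hn, zero_kronecker]⟩
  have := isNilpotent_aeval_add_sub_aeval hcomm hnil f
  rwa [aeval_one_kronecker, aeval_companion_self f hf hd, kronecker_zero, sub_zero,
    ← jordanBlock_eq_kronecker] at this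

end Jordan

theorem stmt3_general (F : Type) [Field F] [Fintype F] (b : ℕ)
    (ι : Type) [Fintype ι] [DecidableEq ι]
    (t : ι → ℕ)
    (f : ι → Polynomial F) (hmonic : ∀ i, (f i).Monic) (hirr : ∀ i, Irreducible (f i))
    (hdist : Function.Injective f)
    (e : (i : ι) → Fin (t i) → ℕ) :
    pmp F b (Matrix.blockDiagonal' fun i : ι =>
        Matrix.blockDiagonal' fun j : Fin (t i) =>
          jordanBlock (f i).natDegree (e i j) (f i)) =
      ∏ i : ι, pmp F b (Matrix.blockDiagonal' fun j : Fin (t i) =>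
          jordanBlock (f i).natDegree (e i j) (f i)) := by
  have hprimary : ∀ i, IsNilpotent (aeval (blockDiagonal' fun j : Fin (t i) =>
      jordanBlock (f i).natDegree (e i j) (f i)) (f i)) := fun i => by
    rw [aeval_blockDiagonal']
    exact isNilpotent_blockDiagonal' fun j =>
      isNilpotent_aeval_jordanBlock (hmonic i) (hirr i).natDegree_pos _
  refine pmp_blockDiagonal' b fun i j hij => ?_
  exact (isCoprime_of_monic_of_irreducible_of_ne (hmonic i) (hmonic j) (hirr i) (hirr j)
    (hdist.ne hij)).minpoly_of_isNilpotent_aeval (hprimary i) (hprimary j)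

/-- For a block-diagonal matrix `A = ⊕ᵢ ⊕ⱼ J_{fᵢ^{e_{i,j}}}` with distinct monic
irreducible `fᵢ` and exponents nonincreasing in `j`, the probability of minpoly
preservation is the product over `i` of the probabilities for the primary
components `⊕ⱼ J_{fᵢ^{e_{i,j}}}`. -/
theorem stmt3 (F : Type) [Field F] [Fintype F] (b : ℕ) (hb : 0 < b)
    (ι : Type) [Fintype ι] [DecidableEq ι]
    (t : ι → ℕ) (ht : ∀ i, 0 < t i)
    (f : ι → Polynomial F) (hmonic : ∀ i, (f i).Monic) (hirr : ∀ i, Irreducible (f i))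
    (hdist : Function.Injective f)
    (e : (i : ι) → Fin (t i) → ℕ) (hepos : ∀ i j, 0 < e i j)
    (hmono : ∀ i, ∀ j j' : Fin (t i), j ≤ j' → e i j' ≤ e i j) :
    pmp F b (Matrix.blockDiagonal' fun i : ι =>
        Matrix.blockDiagonal' fun j : Fin (t i) =>
          jordanBlock (f i).natDegree (e i j) (f i)) =
      ∏ i : ι, pmp F b (Matrix.blockDiagonal' fun j : Fin (t i) =>
          jordanBlock (f i).natDegree (e i j) (f i)) :=
  stmt3_general F b ι t f hmonic hirr hdist e
end

section
/- Let f ∈ F_q[x] be a monic irreducible polynomial of degree d, K = F_q[x]/⟨f⟩, and ρ: K → F_q^{d×d} the regular matrix representation of K with respect to the basis {1, x, ..., x^{d-1}}. Then there exists a symmetric nonsingular matrix P ∈ F_q^{d×d} such that P^{-1} ρ(v) P = ρ(v)^T for all v ∈ F_q^d (identifying v ∈ F_q^d with Σ_{i=0}^{d-1} v_i x^i ∈ K). -/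
/-! For a field `A` of finite dimension over `F` and any nonzero functional `λ : A → F`, the
form `(x, y) ↦ λ (x * y)` is symmetric and nondegenerate (if `x ≠ 0`, pick `c` with `λ c ≠ 0`
and pair `x` with `x⁻¹ * c`), and multiplication by any `a` is self-adjoint for it. Its Gram
matrix `J` is therefore symmetric, invertible and satisfies `J ρ(a) = ρ(a)ᵀ J`; take `P = J⁻¹`. -/

open Matrix Polynomial

/-- Identify `v ∈ F^d` with the element `∑ᵢ vᵢ xⁱ` of `K = F[x]/⟨f⟩`. -/
noncomputable def toExt {F : Type} [Field F] {d : ℕ} (f : Polynomial F)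
    (v : Fin d → F) : AdjoinRoot f :=
  ∑ i : Fin d, v i • AdjoinRoot.root f ^ (i : ℕ)

namespace LinearMap.BilinForm

variable {F A : Type*} [CommRing F]

def mulForm [CommRing A] [Algebra F A] (lam : A →ₗ[F] F) : LinearMap.BilinForm F A :=
  (LinearMap.mul F A).compr₂ lam

@[simp] theorem mulForm_apply [CommRing A] [Algebra F A] (lam : A →ₗ[F] F) (x y : A) :
    mulForm lam x y = lam (x * y) := rfl

theorem mulForm_isSymm [CommRing A] [Algebra F A] (lam : A →ₗ[F] F) : (mulForm lam).IsSymm :=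
  ⟨fun x y => by simp only [mulForm_apply, mul_comm]⟩

theorem mulForm_compLeft_mulLeft [CommRing A] [Algebra F A] (lam : A →ₗ[F] F) (a : A) :
    (mulForm lam).compLeft (LinearMap.mulLeft F a) =
      (mulForm lam).compRight (LinearMap.mulLeft F a) := by
  ext x y
  simp only [compLeft_apply, compRight_apply, mulLeft_apply, mulForm_apply, mul_assoc,
    mul_left_comm a x]

theorem mulForm_nondegenerate [Field A] [Algebra F A] {lam : A →ₗ[F] F} (hlam : lam ≠ 0) :
    (mulForm lam).Nondegenerate := by
  obtain ⟨c, hc⟩ : ∃ c, lam c ≠ 0 := by simpa [LinearMap.ext_iff] using hlam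
  have sep : ∀ x : A, (∀ y, lam (x * y) = 0) → x = 0 := fun x hx => by
    by_contra hx0
    exact hc (by simpa [hx0] using hx (x⁻¹ * c))
  exact ⟨fun x hx => sep x hx, fun y hy => sep y fun x => by simpa [mul_comm] using hy x⟩

end LinearMap.BilinForm

open LinearMap.BilinForm in
theorem Algebra.exists_isSymm_isUnit_mul_leftMulMatrix {F A ι : Type*} [Field F] [Field A]
    [Algebra F A] [Fintype ι] [DecidableEq ι] (b : Module.Basis ι F A) :
    ∃ J : Matrix ι ι F, J.IsSymm ∧ IsUnit J ∧
      ∀ a, J * leftMulMatrix b a = (leftMulMatrix b a)ᵀ * J := by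
  obtain ⟨i⟩ := b.index_nonempty
  have hlam : b.coord i ≠ 0 := fun h => by simpa using LinearMap.congr_fun h (b i)
  refine ⟨toMatrix b (mulForm (b.coord i)), ?_, ?_, fun a => ?_⟩
  · exact (isSymm_toMatrix_iff_isSymm b).mpr (mulForm_isSymm _)
  · rw [isUnit_iff_isUnit_det, isUnit_iff_ne_zero,
      ← LinearMap.BilinForm.nondegenerate_iff_det_ne_zero]
    exact mulForm_nondegenerate hlam
  · rw [← toMatrix_lmul_eq, ← toMatrix_compRight, ← toMatrix_compLeft, mulForm_compLeft_mulLeft]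

theorem Algebra.leftMulMatrix_eq_of_equivFun_symm_mulVec {F A ι : Type*} [CommRing F] [Ring A]
    [Algebra F A] [Fintype ι] [DecidableEq ι] (b : Module.Basis ι F A) {M : Matrix ι ι F} {a : A}
    (h : ∀ u, b.equivFun.symm (M *ᵥ u) = a * b.equivFun.symm u) : leftMulMatrix b a = M := by
  refine ext_iff_mulVec.mpr fun u => b.equivFun.symm.injective ?_
  obtain ⟨y, rfl⟩ := b.equivFun.surjective u
  rw [h, LinearEquiv.symm_apply_apply, b.equivFun_apply, leftMulMatrix_mulVec_repr,
    ← b.equivFun_apply, LinearEquiv.symm_apply_apply]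

noncomputable def AdjoinRoot.monomialBasis {F : Type*} [Field F] {f : F[X]} (hf : f ≠ 0) :
    Module.Basis (Fin f.natDegree) F (AdjoinRoot f) :=
  (AdjoinRoot.powerBasis hf).basis

theorem AdjoinRoot.monomialBasis_apply {F : Type*} [Field F] {f : F[X]} (hf : f ≠ 0)
    (i : Fin f.natDegree) : monomialBasis hf i = root f ^ (i : ℕ) := by
  rw [← powerBasis_gen hf]
  exact (powerBasis hf).basis_eq_pow i

theorem toExt_eq_monomialBasis_equivFun_symm {F : Type} [Field F] {f : F[X]} (hf : f ≠ 0)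
    (v : Fin f.natDegree → F) : toExt f v = (AdjoinRoot.monomialBasis hf).equivFun.symm v := by
  simp only [toExt, Module.Basis.equivFun_symm_apply, AdjoinRoot.monomialBasis_apply]

theorem stmt10_general (F : Type) [Field F]
    (f : Polynomial F) (hirr : Irreducible f)
    (d : ℕ) (hd : d = f.natDegree)
    (rho : (Fin d → F) → Matrix (Fin d) (Fin d) F)
    (hrho : ∀ w u : Fin d → F,
      toExt f ((rho w).mulVec u) = toExt f w * toExt f u) :
    ∃ P : Matrix (Fin d) (Fin d) F, P.IsSymm ∧ IsUnit P ∧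
      ∀ v : Fin d → F, P⁻¹ * rho v * P = (rho v)ᵀ := by
  subst hd
  have hf : f ≠ 0 := hirr.ne_zero
  have : Fact (Irreducible f) := ⟨hirr⟩
  set b := AdjoinRoot.monomialBasis hf
  have hrho_eq (v) : rho v = Algebra.leftMulMatrix b (toExt f v) :=
    (Algebra.leftMulMatrix_eq_of_equivFun_symm_mulVec b fun u => by
      simpa only [toExt_eq_monomialBasis_equivFun_symm hf] using hrho v u).symm
  obtain ⟨J, hJ_symm, hJ_unit, hJ⟩ := Algebra.exists_isSymm_isUnit_mul_leftMulMatrix b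
  have hJ_det := (isUnit_iff_isUnit_det J).mp hJ_unit
  refine ⟨J⁻¹, hJ_symm.inv, isUnit_nonsing_inv_iff.mpr hJ_unit, fun v => ?_⟩
  rw [nonsing_inv_nonsing_inv J hJ_det, hrho_eq, hJ, mul_assoc, mul_nonsing_inv J hJ_det, mul_one]

/-- If `ρ` is the regular matrix representation of `K = F_q[x]/⟨f⟩` with respect to the
basis `{1, x, …, x^{d-1}}` (i.e. `ρ(w)u = w·u` in `K`), then there is a symmetric
nonsingular `P` with `P⁻¹ ρ(v) P = ρ(v)ᵀ` for all `v ∈ F_q^d`. -/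
theorem stmt10 (F : Type) [Field F] [Fintype F]
    (f : Polynomial F) (hmonic : f.Monic) (hirr : Irreducible f)
    (d : ℕ) (hd : d = f.natDegree)
    (rho : (Fin d → F) → Matrix (Fin d) (Fin d) F)
    (hrho : ∀ w u : Fin d → F,
      toExt f ((rho w).mulVec u) = toExt f w * toExt f u) :
    ∃ P : Matrix (Fin d) (Fin d) F, P.IsSymm ∧ IsUnit P ∧
      ∀ v : Fin d → F, P⁻¹ * rho v * P = (rho v)ᵀ :=
  stmt10_general F f hirr d hd rho hrho
end

section
/- Let q be a prime power, f ∈ F_q[x] a monic irreducible polynomial of degree d, K = F_q[x]/⟨f⟩, and b, t positive integers. Then the number of tuples (U_1, V_1, ..., U_t, V_t) with U_k ∈ F_q^{b×d}, V_k ∈ F_q^{d×b} such that the sequence Σ_{k=1}^t U_k·C̄_f·V_k is the zero sequence equals the number of tuples (u_1, v_1, ..., u_t, v_t) with u_k, v_k ∈ K^b such that the b×b matrix Σ_{k=1}^t u_k v_k^T over K is the zero matrix. -/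
open Matrix Polynomial

/-!
Multiplication by `α = root f` on `K = F[X]/(f)` has matrix `C_f` in the basis `1, α, …, α^{d-1}`.
Fix a nonzero `F`-linear functional `φ` on `K`. Since `K` is a field, the pairing `(a, c) ↦ φ (a c)`
is perfect, so the rows of `U` are the coordinate vectors of the functionals `c ↦ φ (u_r c)` for
unique `u_r ∈ K`, while the columns of `V` are the coordinate vectors of elements `v_s ∈ K`. Then
`(U C_f^k V)_{rs} = φ (α^k u_r v_s)`, so `∑ᵢ Uᵢ C_f^k Vᵢ = 0` for all `k` says that `φ (α^k m) = 0`
for every entry `m` of `∑ᵢ uᵢ vᵢᵀ` and every `k`; as the powers of `α` span `K`, this forces `m = 0`.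
-/

section
variable {F K : Type*} [Field F] [Field K] [Algebra F K] {ι : Type*} [Fintype ι]

theorem eq_zero_of_forall_dual_mul_eq_zero {φ : Module.Dual F K} (hφ : φ ≠ 0) {y : K}
    (h : ∀ c, φ (c * y) = 0) : y = 0 := by
  by_contra hy
  refine hφ (LinearMap.ext fun z => ?_)
  simpa [hy] using h (z * y⁻¹)

noncomputable def mulCoords (φ : Module.Dual F K) (e : Module.Basis ι F K) : K →ₗ[F] ι → F :=
  LinearMap.pi fun m => φ ∘ₗ LinearMap.mulRight F (e m)

theorem mulCoords_dotProduct (φ : Module.Dual F K) (e : Module.Basis ι F K) (a c : K) :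
    mulCoords φ e a ⬝ᵥ e.equivFun c = φ (a * c) := by
  conv_rhs => rw [← e.sum_equivFun c, Finset.mul_sum, map_sum]
  simp only [mulCoords, dotProduct, LinearMap.pi_apply, LinearMap.comp_apply,
    LinearMap.mulRight_apply, mul_smul_comm, map_smul, smul_eq_mul, mul_comm]

theorem mulCoords_injective {φ : Module.Dual F K} (hφ : φ ≠ 0) (e : Module.Basis ι F K) :
    Function.Injective (mulCoords φ e) := by
  refine (injective_iff_map_eq_zero _).2 fun a ha =>
    eq_zero_of_forall_dual_mul_eq_zero hφ fun c => ?_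
  rw [mul_comm, ← mulCoords_dotProduct φ e, ha, zero_dotProduct]

noncomputable def mulCoordsEquiv {φ : Module.Dual F K} (hφ : φ ≠ 0) (e : Module.Basis ι F K) :
    K ≃ₗ[F] ι → F :=
  haveI := e.finiteDimensional_of_finite
  LinearMap.linearEquivOfInjective _ (mulCoords_injective hφ e)
    (by simp [Module.finrank_eq_card_basis e])

noncomputable def factorEquiv {φ : Module.Dual F K} (hφ : φ ≠ 0) (e : Module.Basis ι F K)
    (β γ : Type*) : (β → K) × (γ → K) ≃ Matrix β ι F × Matrix ι γ F :=
  Equiv.prodCongr ((Equiv.piCongrRight fun _ => (mulCoordsEquiv hφ e).toEquiv).trans Matrix.of)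
    ((Equiv.piCongrRight fun _ => e.equivFun.toEquiv).trans
      (Matrix.of.trans (Matrix.transposeAddEquiv γ ι F).toEquiv))

theorem factorEquiv_mul_leftMulMatrix_mul [DecidableEq ι] {φ : Module.Dual F K} (hφ : φ ≠ 0)
    (e : Module.Basis ι F K) {β γ : Type*} (u : β → K) (v : γ → K) (x : K) :
    (factorEquiv hφ e β γ (u, v)).1 * Algebra.leftMulMatrix e x *
        (factorEquiv hφ e β γ (u, v)).2 = (φ ∘ₗ LinearMap.mulLeft F x).mapMatrix (vecMulVec u v) := by
  ext r s
  have hcol : (Algebra.leftMulMatrix e x * (factorEquiv hφ e β γ (u, v)).2).col s =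
      e.equivFun (x * v s) := by
    ext m
    rw [e.equivFun_apply, ← Algebra.leftMulMatrix_mulVec_repr]
    rfl
  calc _ = mulCoords φ e (u r) ⬝ᵥ
        (Algebra.leftMulMatrix e x * (factorEquiv hφ e β γ (u, v)).2).col s := by
        rw [Matrix.mul_assoc, mul_apply']; rfl
    _ = φ (x * (u r * v s)) := by rw [hcol, mulCoords_dotProduct, mul_left_comm]

theorem forall_dual_gen_pow_mul_eq_zero_iff {φ : Module.Dual F K} (hφ : φ ≠ 0)
    (pb : PowerBasis F K) (y : K) : (∀ k : ℕ, φ (pb.gen ^ k * y) = 0) ↔ y = 0 := by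
  refine ⟨fun h => eq_zero_of_forall_dual_mul_eq_zero hφ fun c => ?_, fun hy k => by simp [hy]⟩
  rw [← pb.basis.sum_repr c, Finset.sum_mul, map_sum]
  simp [pb.basis_eq_pow, h]

theorem forall_mapMatrix_gen_pow_eq_zero_iff {φ : Module.Dual F K} (hφ : φ ≠ 0)
    (pb : PowerBasis F K) {β γ : Type*} (M : Matrix β γ K) :
    (∀ k : ℕ, (φ ∘ₗ LinearMap.mulLeft F (pb.gen ^ k)).mapMatrix M = 0) ↔ M = 0 := by
  refine ⟨fun h => ext fun r s => (forall_dual_gen_pow_mul_eq_zero_iff hφ pb _).1 fun k => ?_,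
    by rintro rfl; simp⟩
  simpa using congrFun (congrFun (h k) r) s

end

theorem companion_eq_leftMulMatrix {F : Type} [Field F] {f : F[X]} (hf : f.Monic) :
    companion f.natDegree f =
      -- `(AdjoinRoot.powerBasis _).dim` is `f.natDegree` only after unfolding
      Algebra.leftMulMatrix (m := Fin f.natDegree) (AdjoinRoot.powerBasis hf.ne_zero).basis
        (AdjoinRoot.root f) := by
  have h := (AdjoinRoot.powerBasis hf.ne_zero).leftMulMatrix
  rw [PowerBasis.minpolyGen_eq, AdjoinRoot.minpoly_powerBasis_gen_of_monic hf] at h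
  refine Eq.trans ?_ h.symm
  ext i j
  change _ = if (j : ℕ) + 1 = f.natDegree then -f.coeff i else if (i : ℕ) = j + 1 then 1 else 0
  simp only [companion, of_apply]
  split_ifs <;> first | omega | simp

theorem stmt11_general (F : Type) [Field F] (b t : ℕ)
    (f : Polynomial F) (hmonic : f.Monic) (hirr : Irreducible f)
    (d : ℕ) (hd : d = f.natDegree) :
    Nat.card {W : Fin t → Matrix (Fin b) (Fin d) F × Matrix (Fin d) (Fin b) F //
        ∀ k : ℕ, ∑ i : Fin t, (W i).1 * (companion d f) ^ k * (W i).2 = 0} =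
      Nat.card {w : Fin t → (Fin b → AdjoinRoot f) × (Fin b → AdjoinRoot f) //
        ∑ i : Fin t, Matrix.vecMulVec (w i).1 (w i).2 = 0} := by
  subst hd
  have := Fact.mk hirr
  obtain ⟨φ, hφ1⟩ : ∃ φ : Module.Dual F (AdjoinRoot f), φ 1 ≠ 0 :=
    Module.Projective.exists_dual_ne_zero F one_ne_zero
  have hφ : φ ≠ 0 := by rintro rfl; exact hφ1 rfl
  let pb := AdjoinRoot.powerBasis hmonic.ne_zero
  let e : Module.Basis (Fin f.natDegree) F (AdjoinRoot f) := pb.basis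
  refine Nat.card_congr ((Equiv.piCongrRight fun _ =>
    factorEquiv hφ e (Fin b) (Fin b)).subtypeEquiv fun w => ?_).symm
  have hsum : ∀ k : ℕ, ∑ i, (factorEquiv hφ e _ _ (w i)).1 * companion f.natDegree f ^ k *
      (factorEquiv hφ e _ _ (w i)).2 = (φ ∘ₗ LinearMap.mulLeft F (pb.gen ^ k)).mapMatrix
        (∑ i, vecMulVec (w i).1 (w i).2) := fun k => by
    rw [companion_eq_leftMulMatrix hmonic, ← map_pow, map_sum]
    exact Finset.sum_congr rfl fun i _ => factorEquiv_mul_leftMulMatrix_mul hφ _ _ _ _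
  simp only [Equiv.piCongrRight_apply, Pi.map_apply, hsum]
  exact (forall_mapMatrix_gen_pow_eq_zero_iff hφ pb _).symm

/-- The number of tuples `(U₁, V₁, …, U_t, V_t)` over `F_q` for which the sequence
`∑ₖ Uₖ·C̄_f·Vₖ` is zero equals the number of tuples `(u₁, v₁, …, u_t, v_t)` of vectors
over `K = F_q[x]/⟨f⟩` for which the sum of outer products `∑ₖ uₖ vₖᵀ` is zero. -/
theorem stmt11 (F : Type) [Field F] [Fintype F] (b t : ℕ) (hb : 0 < b) (ht : 0 < t)
    (f : Polynomial F) (hmonic : f.Monic) (hirr : Irreducible f)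
    (d : ℕ) (hd : d = f.natDegree) :
    Nat.card {W : Fin t → Matrix (Fin b) (Fin d) F × Matrix (Fin d) (Fin b) F //
        ∀ k : ℕ, ∑ i : Fin t, (W i).1 * (companion d f) ^ k * (W i).2 = 0} =
      Nat.card {w : Fin t → (Fin b → AdjoinRoot f) × (Fin b → AdjoinRoot f) //
        ∑ i : Fin t, Matrix.vecMulVec (w i).1 (w i).2 = 0} :=
  stmt11_general F b t f hmonic hirr d hd
end

section
/- Let F be a field, r, s ≥ 0, n = r + s, and A = I_r ⊕ 0_s ∈ F^{n×n}. Let u = (u_1^T, u_2^T)^T and v = (v_1^T, v_2^T)^T ∈ F^n be column vectors blocked conformally with u_1, v_1 ∈ F^r and u_2, v_2 ∈ F^s. Then: rank(A + u v^T) = r − 1 if and only if u_1^T v_1 = −1 and u_2 = 0 and v_2 = 0; and rank(A + u v^T) = r + 1 if and only if u_2 ≠ 0 and v_2 ≠ 0. -/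
/-!
Write `P = I_r ⊕ 0_s` and `M = P + u vᵀ`. If `v₂ ≠ 0`, some `x ∈ ker P` has `vᵀx ≠ 0`, so
`u ∈ range M`, hence `range P ⊆ range M`; if also `u₂ ≠ 0` then `u ∉ range P` and the rank
reaches its subadditivity bound `r + 1`. Transposing, `u₂ ≠ 0` also forces rank `≥ r`. If
`u₂ = 0` then `M = P (1 + u vᵀ)` (and if `v₂ = 0` then `M = (1 + u vᵀ) P`), so the rank is
at most `r`; when both vanish, `det (1 + u vᵀ) = 1 + vᵀu`, so the rank is `r` unless
`vᵀu = -1`, in which case `u` joins `ker P` inside `ker M` and the rank drops to `r - 1`.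
-/

open Matrix Module

namespace Matrix

section RankOneUpdate

variable {F n : Type*} [Field F] [Fintype n] (P : Matrix n n F) (u v : n → F)

theorem rank_add_vecMulVec_le : (P + vecMulVec u v).rank ≤ P.rank + 1 :=
  calc (P + vecMulVec u v).rank
      ≤ finrank F
          ↥(LinearMap.range P.mulVecLin ⊔ LinearMap.range (vecMulVec u v).mulVecLin) := by
        rw [rank, mulVecLin_add]
        exact Submodule.finrank_mono (LinearMap.range_add_le _ _)
    _ ≤ P.rank + (vecMulVec u v).rank := Submodule.finrank_add_le_finrank_add_finrank _ _
    _ ≤ P.rank + 1 := by grw [rank_vecMulVec_le]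

theorem rank_le_rank_add_vecMulVec_add_one : P.rank ≤ (P + vecMulVec u v).rank + 1 := by
  simpa [neg_vecMulVec] using rank_add_vecMulVec_le (P + vecMulVec u v) (-u) v

theorem mul_one_add_vecMulVec [DecidableEq n] :
    P * (1 + vecMulVec u v) = P + vecMulVec (P *ᵥ u) v := by
  rw [Matrix.mul_add, Matrix.mul_one, mul_vecMulVec]

theorem one_add_vecMulVec_mul [DecidableEq n] :
    (1 + vecMulVec u v) * P = P + vecMulVec u (v ᵥ* P) := by
  rw [Matrix.add_mul, Matrix.one_mul, vecMulVec_mul]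

variable {P u v}

theorem rank_add_vecMulVec_le_of_mulVec_eq [DecidableEq n] (hu : P *ᵥ u = u) :
    (P + vecMulVec u v).rank ≤ P.rank := by
  have h := mul_one_add_vecMulVec P u v
  rw [hu] at h
  exact h ▸ rank_mul_le_left _ _

theorem rank_add_vecMulVec_le_of_vecMul_eq [DecidableEq n] (hv : v ᵥ* P = v) :
    (P + vecMulVec u v).rank ≤ P.rank := by
  have h := one_add_vecMulVec_mul P u v
  rw [hv] at h
  exact h ▸ rank_mul_le_right _ _

theorem rank_add_vecMulVec_of_mulVec_eq [DecidableEq n] (hu : P *ᵥ u = u) (h : v ⬝ᵥ u ≠ -1) :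
    (P + vecMulVec u v).rank = P.rank := by
  have hdet : (1 + vecMulVec u v).det = 1 + v ⬝ᵥ u := by
    rw [vecMulVec_eq Unit, det_one_add_replicateCol_mul_replicateRow]
  have hM := mul_one_add_vecMulVec P u v
  rw [hu] at hM
  have hunit : IsUnit (1 + vecMulVec u v).det := by
    rw [hdet, isUnit_iff_ne_zero]
    exact fun h0 => h (eq_neg_of_add_eq_zero_right h0)
  rw [← hM, rank_mul_eq_left_of_isUnit_det _ _ hunit]

theorem rank_add_vecMulVec_add_one_le (hu : P *ᵥ u = u) (hv : v ᵥ* P = v) (h : v ⬝ᵥ u = -1) :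
    (P + vecMulVec u v).rank + 1 ≤ P.rank := by
  set M := P + vecMulVec u v
  have hu0 : u ∉ LinearMap.ker P.mulVecLin := by
    rintro hPu
    rw [LinearMap.mem_ker, mulVecLin_apply, hu] at hPu
    simp [hPu] at h
  have hker :
      LinearMap.ker P.mulVecLin ⊔ Submodule.span F {u} ≤ LinearMap.ker M.mulVecLin := by
    refine sup_le (fun x hx => ?_) ?_
    · rw [LinearMap.mem_ker, mulVecLin_apply] at hx ⊢
      rw [add_mulVec, hx, vecMulVec_mulVec, ← hv, ← dotProduct_mulVec, hx]
      simp
    · rw [Submodule.span_le, Set.singleton_subset_iff, SetLike.mem_coe, LinearMap.mem_ker,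
        mulVecLin_apply, add_mulVec, hu, vecMulVec_mulVec, h]
      simp
  have hM := LinearMap.finrank_range_add_finrank_ker M.mulVecLin
  have hP := LinearMap.finrank_range_add_finrank_ker P.mulVecLin
  have hfin := Submodule.finrank_mono hker
  rw [Submodule.finrank_sup_span_singleton hu0] at hfin
  change M.rank + _ = _ at hM
  change P.rank + _ = _ at hP
  omega

theorem range_sup_span_le_range_add_vecMulVec {x : n → F} (hx : P *ᵥ x = 0)
    (hvx : v ⬝ᵥ x ≠ 0) :
    LinearMap.range P.mulVecLin ⊔ Submodule.span F {u} ≤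
      LinearMap.range (P + vecMulVec u v).mulVecLin := by
  have hMx (y : n → F) : (P + vecMulVec u v).mulVecLin y = P *ᵥ y + (v ⬝ᵥ y) • u := by
    rw [mulVecLin_apply, add_mulVec, vecMulVec_mulVec, op_smul_eq_smul]
  have hu : u ∈ LinearMap.range (P + vecMulVec u v).mulVecLin :=
    ⟨(v ⬝ᵥ x)⁻¹ • x, by rw [hMx, mulVec_smul, hx, dotProduct_smul, smul_eq_mul,
      inv_mul_cancel₀ hvx, smul_zero, zero_add, one_smul]⟩
  refine sup_le ?_ ((Submodule.span_singleton_le_iff_mem _ _).mpr hu)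
  rintro _ ⟨y, rfl⟩
  have hPy : P.mulVecLin y = (P + vecMulVec u v).mulVecLin y - (v ⬝ᵥ y) • u := by
    rw [hMx, add_sub_cancel_right, mulVecLin_apply]
  rw [hPy]
  exact sub_mem (LinearMap.mem_range_self _ _) (Submodule.smul_mem _ _ hu)

theorem rank_le_rank_add_vecMulVec {x : n → F} (hx : P *ᵥ x = 0) (hvx : v ⬝ᵥ x ≠ 0) :
    P.rank ≤ (P + vecMulVec u v).rank :=
  Submodule.finrank_mono (le_sup_left.trans (range_sup_span_le_range_add_vecMulVec hx hvx))

theorem rank_add_one_le_rank_add_vecMulVec {x : n → F} (hx : P *ᵥ x = 0) (hvx : v ⬝ᵥ x ≠ 0)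
    (hu : u ∉ LinearMap.range P.mulVecLin) : P.rank + 1 ≤ (P + vecMulVec u v).rank := by
  rw [rank, ← Submodule.finrank_sup_span_singleton hu]
  exact Submodule.finrank_mono (range_sup_span_le_range_add_vecMulVec hx hvx)

theorem rank_le_rank_add_vecMulVec_of_vecMul_eq_zero {x : n → F} (hx : x ᵥ* P = 0)
    (hux : u ⬝ᵥ x ≠ 0) : P.rank ≤ (P + vecMulVec u v).rank := by
  have h := rank_le_rank_add_vecMulVec (P := Pᵀ) (u := v) (v := u)
    (by rwa [mulVec_transpose]) hux
  rwa [← transpose_vecMulVec, ← transpose_add, rank_transpose, rank_transpose] at h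

end RankOneUpdate

section FromBlocksOneZero

variable {F m n : Type*} [Field F] [Fintype m] [Fintype n] [DecidableEq m]

theorem rank_fromBlocks_one_zero :
    (fromBlocks 1 0 0 0 : Matrix (m ⊕ n) (m ⊕ n) F).rank = Fintype.card m := by
  classical
  rw [← diagonal_one, ← diagonal_zero, fromBlocks_diagonal, rank_diagonal, Fintype.card_subtype,
    Finset.card_filter, Fintype.sum_sum_type]
  simp

theorem fromBlocks_one_zero_mulVec_of_inr_eq_zero {u : m ⊕ n → F} (hu : ∀ j, u (.inr j) = 0) :
    (fromBlocks 1 0 0 0 : Matrix (m ⊕ n) (m ⊕ n) F) *ᵥ u = u := by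
  ext (i | j) <;> simp [fromBlocks_mulVec, hu]

theorem vecMul_fromBlocks_one_zero_of_inr_eq_zero {v : m ⊕ n → F} (hv : ∀ j, v (.inr j) = 0) :
    v ᵥ* (fromBlocks 1 0 0 0 : Matrix (m ⊕ n) (m ⊕ n) F) = v := by
  ext (i | j) <;> simp [vecMul_fromBlocks, hv]

variable [DecidableEq n] {u v : m ⊕ n → F}

theorem card_le_rank_fromBlocks_add_vecMulVec_of_right {k : n} (hv : v (.inr k) ≠ 0) :
    Fintype.card m ≤ (fromBlocks 1 0 0 0 + vecMulVec u v).rank := by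
  rw [← rank_fromBlocks_one_zero (n := n) (F := F)]
  refine rank_le_rank_add_vecMulVec (x := Pi.single (.inr k) 1) ?_ (by simpa using hv)
  ext (i | j) <;> simp

theorem card_le_rank_fromBlocks_add_vecMulVec_of_left {j : n} (hu : u (.inr j) ≠ 0) :
    Fintype.card m ≤ (fromBlocks 1 0 0 0 + vecMulVec u v).rank := by
  rw [← rank_fromBlocks_one_zero (n := n) (F := F)]
  refine rank_le_rank_add_vecMulVec_of_vecMul_eq_zero (x := Pi.single (.inr j) 1) ?_
    (by simpa using hu)
  ext (i | j) <;> simp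

theorem rank_fromBlocks_add_vecMulVec_eq_card_add_one {j k : n} (hu : u (.inr j) ≠ 0)
    (hv : v (.inr k) ≠ 0) : (fromBlocks 1 0 0 0 + vecMulVec u v).rank = Fintype.card m + 1 := by
  rw [← rank_fromBlocks_one_zero (n := n) (F := F)]
  refine le_antisymm (rank_add_vecMulVec_le _ _ _) ?_
  refine rank_add_one_le_rank_add_vecMulVec (x := Pi.single (.inr k) 1) ?_ (by simpa using hv) ?_
  · ext (i | j) <;> simp
  · rintro ⟨x, hx⟩
    exact hu (by simp [← hx, fromBlocks_mulVec])

theorem rank_fromBlocks_add_vecMulVec_le_card_of_left (hu : ∀ j, u (.inr j) = 0) :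
    (fromBlocks 1 0 0 0 + vecMulVec u v).rank ≤ Fintype.card m := by
  rw [← rank_fromBlocks_one_zero (n := n) (F := F)]
  exact rank_add_vecMulVec_le_of_mulVec_eq (fromBlocks_one_zero_mulVec_of_inr_eq_zero hu)

theorem rank_fromBlocks_add_vecMulVec_le_card_of_right (hv : ∀ j, v (.inr j) = 0) :
    (fromBlocks 1 0 0 0 + vecMulVec u v).rank ≤ Fintype.card m := by
  rw [← rank_fromBlocks_one_zero (n := n) (F := F)]
  exact rank_add_vecMulVec_le_of_vecMul_eq (vecMul_fromBlocks_one_zero_of_inr_eq_zero hv)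

theorem rank_fromBlocks_add_vecMulVec_add_one_eq_card_iff (hu : ∀ j, u (.inr j) = 0)
    (hv : ∀ j, v (.inr j) = 0) :
    (fromBlocks 1 0 0 0 + vecMulVec u v).rank + 1 = Fintype.card m ↔
      ∑ i, u (.inl i) * v (.inl i) = -1 := by
  have hPu := fromBlocks_one_zero_mulVec_of_inr_eq_zero (F := F) hu
  have hvu : v ⬝ᵥ u = ∑ i, u (.inl i) * v (.inl i) := by
    simp [dotProduct, Fintype.sum_sum_type, hu, mul_comm]
  rw [← rank_fromBlocks_one_zero (n := n) (F := F), ← hvu]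
  refine ⟨fun h => ?_, fun h => le_antisymm ?_ (rank_le_rank_add_vecMulVec_add_one _ _ _)⟩
  · by_contra hne
    have := rank_add_vecMulVec_of_mulVec_eq hPu hne
    omega
  · exact rank_add_vecMulVec_add_one_le hPu (vecMul_fromBlocks_one_zero_of_inr_eq_zero hv) h

end FromBlocksOneZero

end Matrix

/-- Rank-one update of `A = I_r ⊕ 0_s`: the rank drops to `r - 1` iff
`u₁ᵀv₁ = -1` and `u₂ = 0` and `v₂ = 0`; the rank rises to `r + 1` iff
`u₂ ≠ 0` and `v₂ ≠ 0`. -/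
theorem stmt12 (F : Type) [Field F] (r s : ℕ)
    (A : Matrix (Fin r ⊕ Fin s) (Fin r ⊕ Fin s) F)
    (hA : A = Matrix.fromBlocks (1 : Matrix (Fin r) (Fin r) F) 0 0 0)
    (u v : Fin r ⊕ Fin s → F) :
    ((((A + Matrix.vecMulVec u v).rank : ℤ) = (r : ℤ) - 1) ↔
      ((∑ i : Fin r, u (Sum.inl i) * v (Sum.inl i)) = -1 ∧
        (∀ i : Fin s, u (Sum.inr i) = 0) ∧ (∀ i : Fin s, v (Sum.inr i) = 0))) ∧
    (((A + Matrix.vecMulVec u v).rank = r + 1) ↔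
      ((∃ i : Fin s, u (Sum.inr i) ≠ 0) ∧ (∃ i : Fin s, v (Sum.inr i) ≠ 0))) := by
  subst hA
  have hcard : Fintype.card (Fin r) = r := Fintype.card_fin r
  refine ⟨⟨fun h => ?_, fun ⟨hsum, hu, hv⟩ => ?_⟩,
    ⟨fun h => ⟨?_, ?_⟩, fun ⟨⟨j, hj⟩, ⟨k, hk⟩⟩ => ?_⟩⟩
  · have hu : ∀ j, u (.inr j) = 0 := fun j => by_contra fun hj => by
      have := card_le_rank_fromBlocks_add_vecMulVec_of_left (v := v) hj
      omega
    have hv : ∀ k, v (.inr k) = 0 := fun k => by_contra fun hk => by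
      have := card_le_rank_fromBlocks_add_vecMulVec_of_right (u := u) hk
      omega
    refine ⟨(rank_fromBlocks_add_vecMulVec_add_one_eq_card_iff hu hv).mp (by omega), hu, hv⟩
  · have := (rank_fromBlocks_add_vecMulVec_add_one_eq_card_iff hu hv).mpr hsum
    omega
  · by_contra! hu
    have := rank_fromBlocks_add_vecMulVec_le_card_of_left (v := v) hu
    omega
  · by_contra! hv
    have := rank_fromBlocks_add_vecMulVec_le_card_of_right (u := u) hv
    omega
  · rw [rank_fromBlocks_add_vecMulVec_eq_card_add_one hj hk, hcard]
end

section
/- Let q be a prime power, n a positive integer, A ∈ F_q^{n×n} a matrix of rank r. Then the number of pairs (u, v) ∈ F_q^n × F_q^n with rank(A + u v^T) = r − 1 equals q^{r−1}(q^r − 1); i.e., for uniformly random u, v ∈ F_q^n the probability that rank(A + u v^T) = r − 1 is D(r) = q^{r−1}(q^r − 1)/q^{2n}. -/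
open Matrix

open Module


section Aux

set_option linter.unusedSectionVars false
variable {F : Type} [Field F] [Fintype F] {n : ℕ}

/-- dot product as a bilinear map -/
noncomputable def dotLin (n : ℕ) (F : Type) [Field F] :
    (Fin n → F) →ₗ[F] Module.Dual F (Fin n → F) :=
  LinearMap.mk₂ F dotProduct add_dotProduct smul_dotProduct dotProduct_add dotProduct_smul

lemma dotLin_apply (v x : Fin n → F) : dotLin n F v x = v ⬝ᵥ x := rfl

lemma dotLin_surj : Function.Surjective (dotLin n F) := by
  intro φ
  refine ⟨fun i => φ (fun j => if i = j then 1 else 0), LinearMap.ext fun x => ?_⟩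
  rw [dotLin_apply, LinearMap.pi_apply_eq_sum_univ φ x, dotProduct]
  simp [mul_comm]

lemma aux_dot (A : Matrix (Fin n) (Fin n) F) (w x : Fin n → F) :
    (Aᵀ *ᵥ w) ⬝ᵥ x = w ⬝ᵥ (A *ᵥ x) := by
  rw [mulVec_transpose, ← dotProduct_mulVec]

lemma mem_range_transpose_iff (A : Matrix (Fin n) (Fin n) F) (v : Fin n → F) :
    v ∈ LinearMap.range Aᵀ.mulVecLin ↔ ∀ x, A *ᵥ x = 0 → v ⬝ᵥ x = 0 := by
  classical
  set K := LinearMap.ker A.mulVecLin with hK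
  set Ψ : (Fin n → F) →ₗ[F] Module.Dual F K := K.dualRestrict.comp (dotLin n F) with hΨ
  have hmem : ∀ v : Fin n → F, v ∈ LinearMap.ker Ψ ↔ ∀ x, A *ᵥ x = 0 → v ⬝ᵥ x = 0 := by
    intro v
    constructor
    · intro h x hx
      have : Ψ v ⟨x, by rw [hK, LinearMap.mem_ker, Matrix.mulVecLin_apply]; exact hx⟩ = 0 := by
        rw [h]; rfl
      simpa [hΨ, Submodule.dualRestrict_apply, dotLin_apply] using this
    · intro h
      ext x
      have hx2 : A *ᵥ (x : Fin n → F) = 0 := by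
        exact x.2
      simpa [hΨ, Submodule.dualRestrict_apply, dotLin_apply] using h x.1 hx2
  have hle : LinearMap.range Aᵀ.mulVecLin ≤ LinearMap.ker Ψ := by
    rintro v ⟨w, rfl⟩
    rw [hmem]
    intro x hx
    rw [Matrix.mulVecLin_apply, aux_dot, hx, dotProduct_zero]
  have hsurj : Function.Surjective Ψ :=
    (Subspace.dualRestrict_surjective (W := K)).comp dotLin_surj
  have hrn : finrank F (LinearMap.range Ψ) + finrank F (LinearMap.ker Ψ)
      = finrank F (Fin n → F) := LinearMap.finrank_range_add_finrank_ker Ψ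
  have hrange : finrank F (LinearMap.range Ψ) = finrank F K := by
    rw [LinearMap.range_eq_top.mpr hsurj, finrank_top]
    exact Subspace.dual_finrank_eq
  have hrnA : finrank F (LinearMap.range A.mulVecLin) + finrank F K
      = finrank F (Fin n → F) := LinearMap.finrank_range_add_finrank_ker _
  have hrT : finrank F (LinearMap.range Aᵀ.mulVecLin)
      = finrank F (LinearMap.range A.mulVecLin) := A.rank_transpose
  have : LinearMap.range Aᵀ.mulVecLin = LinearMap.ker Ψ := by
    apply Submodule.eq_of_le_of_finrank_eq hle
    omega
  rw [this]
  exact hmem v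



lemma vecMulVec_mulVecLin (u v x : Fin n → F) :
    (vecMulVec u v).mulVecLin x = (v ⬝ᵥ x) • u := by
  ext i
  simp only [Matrix.mulVecLin_apply, Matrix.mulVec, vecMulVec_apply, dotProduct, Pi.smul_apply,
    smul_eq_mul, Finset.sum_mul, Finset.mul_sum]
  exact Finset.sum_congr rfl fun j _ => by ring

lemma vecMulVec_transpose' (u v : Fin n → F) : (vecMulVec u v)ᵀ = vecMulVec v u := by
  ext i j; simp [vecMulVec_apply, mul_comm]

lemma vecMulVec_neg_right (u v : Fin n → F) : vecMulVec u (-v) = -vecMulVec u v := by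
  ext i j; simp [vecMulVec_apply]

lemma range_le_sup (A : Matrix (Fin n) (Fin n) F) (u v : Fin n → F) :
    LinearMap.range A.mulVecLin ≤
      LinearMap.range (A + vecMulVec u v).mulVecLin ⊔ (Submodule.span F {u}) := by
  rintro - ⟨x, rfl⟩
  have h : A.mulVecLin x = (A + vecMulVec u v).mulVecLin x - (v ⬝ᵥ x) • u := by
    rw [Matrix.mulVecLin_add, LinearMap.add_apply, vecMulVec_mulVecLin]
    abel
  rw [h]
  exact Submodule.sub_mem _ (Submodule.mem_sup_left ⟨x, rfl⟩)
    (Submodule.mem_sup_right (Submodule.smul_mem _ _ (Submodule.mem_span_singleton_self u)))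

lemma rank_le_rank_add_one (A : Matrix (Fin n) (Fin n) F) (u v : Fin n → F) :
    A.rank ≤ (A + vecMulVec u v).rank + 1 := by
  have h1 := range_le_sup A u v
  have h2 : finrank F (Submodule.span F {u}) ≤ 1 := by
    rcases eq_or_ne u 0 with rfl | hu
    · rw [Submodule.span_zero_singleton]; simp
    · rw [finrank_span_singleton hu]
  calc A.rank = finrank F (LinearMap.range A.mulVecLin) := rfl
    _ ≤ finrank F ↥(LinearMap.range (A + vecMulVec u v).mulVecLin ⊔ (Submodule.span F {u})) :=
        Submodule.finrank_mono h1
    _ ≤ (A + vecMulVec u v).rank + 1 :=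
        le_trans (Submodule.finrank_add_le_finrank_add_finrank _ _) (by
          exact add_le_add le_rfl h2)

lemma mem_range_of_rank_lt (A : Matrix (Fin n) (Fin n) F) (u v : Fin n → F)
    (h : (A + vecMulVec u v).rank < A.rank) : u ∈ LinearMap.range A.mulVecLin := by
  have h1 := range_le_sup A u v
  have h2 : finrank F ↥(LinearMap.range (A + vecMulVec u v).mulVecLin ⊔ (Submodule.span F {u}))
      ≤ A.rank := by
    have hs : finrank F ↥(Submodule.span F {u}) ≤ 1 := by
      rcases eq_or_ne u 0 with rfl | hu
      · rw [Submodule.span_zero_singleton]; simp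
      · rw [finrank_span_singleton hu]
    have hadd := Submodule.finrank_add_le_finrank_add_finrank
      (LinearMap.range (A + vecMulVec u v).mulVecLin) (Submodule.span F {u})
    have hg : finrank F ↥(LinearMap.range (A + vecMulVec u v).mulVecLin)
        = (A + vecMulVec u v).rank := rfl
    omega
  have heq : LinearMap.range A.mulVecLin
      = LinearMap.range (A + vecMulVec u v).mulVecLin ⊔ (Submodule.span F {u}) :=
    Submodule.eq_of_le_of_finrank_eq h1 (le_antisymm (Submodule.finrank_mono h1) h2)
  rw [heq]
  exact Submodule.mem_sup_right (Submodule.mem_span_singleton_self u)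

lemma rank_drop_iff (A : Matrix (Fin n) (Fin n) F) (u v : Fin n → F) (hr1 : 1 ≤ A.rank) :
    (A + vecMulVec u v).rank + 1 = A.rank ↔
      (∀ x, A *ᵥ x = 0 → v ⬝ᵥ x = 0) ∧ ∃ x, A *ᵥ x = u ∧ v ⬝ᵥ x = -1 := by
  have hrnA : A.rank + finrank F (LinearMap.ker A.mulVecLin) = n := by
    have := LinearMap.finrank_range_add_finrank_ker A.mulVecLin
    rwa [Module.finrank_pi, Fintype.card_fin] at this
  have hrnG : (A + vecMulVec u v).rank
      + finrank F (LinearMap.ker (A + vecMulVec u v).mulVecLin) = n := by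
    have := LinearMap.finrank_range_add_finrank_ker (A + vecMulVec u v).mulVecLin
    rwa [Module.finrank_pi, Fintype.card_fin] at this
  constructor
  · intro hrank
    have hu : u ∈ LinearMap.range A.mulVecLin :=
      mem_range_of_rank_lt A u v (by omega)
    have hv : v ∈ LinearMap.range Aᵀ.mulVecLin := by
      have h2 : (Aᵀ + vecMulVec v u).rank < Aᵀ.rank := by
        have : (Aᵀ + vecMulVec v u) = (A + vecMulVec u v)ᵀ := by
          rw [transpose_add, vecMulVec_transpose']
        rw [this, rank_transpose, rank_transpose]
        omega
      exact mem_range_of_rank_lt Aᵀ v u h2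
    have hW : ∀ x, A *ᵥ x = 0 → v ⬝ᵥ x = 0 := (mem_range_transpose_iff A v).mp hv
    refine ⟨hW, ?_⟩
    obtain ⟨x, hx⟩ := hu
    rw [Matrix.mulVecLin_apply] at hx
    refine ⟨x, hx, ?_⟩
    by_contra hc
    -- then kernels are equal, so ranks are equal: contradiction
    have hker : LinearMap.ker (A + vecMulVec u v).mulVecLin = LinearMap.ker A.mulVecLin := by
      apply le_antisymm
      · intro y hy
        rw [LinearMap.mem_ker, Matrix.mulVecLin_add, LinearMap.add_apply,
          vecMulVec_mulVecLin] at hy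
        have hy' : A.mulVecLin y = -((v ⬝ᵥ y) • u) := by
          rw [eq_neg_iff_add_eq_zero]; exact hy
        have hsum : A *ᵥ (y + (v ⬝ᵥ y) • x) = 0 := by
          rw [← Matrix.mulVecLin_apply, map_add, LinearMap.map_smul, hy', Matrix.mulVecLin_apply, hx]
          abel
        have h0 := hW _ hsum
        rw [dotProduct_add, dotProduct_smul, smul_eq_mul] at h0
        have hvy : v ⬝ᵥ y = 0 := by
          have h1c : 1 + v ⬝ᵥ x ≠ 0 := fun h => hc (by linear_combination h)
          have : (v ⬝ᵥ y) * (1 + v ⬝ᵥ x) = 0 := by linear_combination h0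
          rcases mul_eq_zero.mp this with h | h
          · exact h
          · exact absurd h h1c
        rw [LinearMap.mem_ker]
        rw [hvy, zero_smul, neg_zero] at hy'
        exact hy'
      · intro y hy
        rw [LinearMap.mem_ker, Matrix.mulVecLin_apply] at hy
        rw [LinearMap.mem_ker, Matrix.mulVecLin_add, LinearMap.add_apply,
          vecMulVec_mulVecLin, Matrix.mulVecLin_apply, hy, hW y hy, zero_smul, add_zero]
    rw [hker] at hrnG
    omega
  · rintro ⟨hW, x, hx, hvx⟩
    have hu0 : u ≠ 0 := by
      rintro rfl
      have := hW x hx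
      rw [hvx] at this
      exact one_ne_zero (neg_eq_zero.mp this)
    -- lower bound
    have hlow := rank_le_rank_add_one A u v
    -- upper bound via kernel
    have hle : LinearMap.ker A.mulVecLin < LinearMap.ker (A + vecMulVec u v).mulVecLin := by
      rw [SetLike.lt_iff_le_and_exists]
      refine ⟨?_, x, ?_, ?_⟩
      · intro y hy
        rw [LinearMap.mem_ker, Matrix.mulVecLin_apply] at hy
        rw [LinearMap.mem_ker, Matrix.mulVecLin_add, LinearMap.add_apply,
          vecMulVec_mulVecLin, Matrix.mulVecLin_apply, hy, hW y hy, zero_smul, add_zero]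
      · rw [LinearMap.mem_ker, Matrix.mulVecLin_add, LinearMap.add_apply,
          vecMulVec_mulVecLin, Matrix.mulVecLin_apply, hx, hvx, neg_smul, one_smul]
        abel
      · rw [LinearMap.mem_ker, Matrix.mulVecLin_apply, hx]
        exact hu0
    have := Submodule.finrank_lt_finrank_of_lt hle
    omega


lemma card_module_eq (M : Type) [AddCommGroup M] [Module F M] [Finite M] :
    Nat.card M = Fintype.card F ^ finrank F M := by
  have : Fintype M := Fintype.ofFinite M
  rw [Nat.card_eq_fintype_card]
  exact card_eq_pow_finrank

lemma card_fiber_eq {M : Type} [AddCommGroup M] [Module F M] [Finite M]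
    (ℓ : M →ₗ[F] F) (m₁ : M) (h1 : ℓ m₁ ≠ 0) (c : F) :
    Nat.card {m : M // ℓ m = c} = Fintype.card F ^ (finrank F M - 1) := by
  have hsurj : Function.Surjective ℓ := by
    intro d
    refine ⟨(d * (ℓ m₁)⁻¹) • m₁, ?_⟩
    rw [LinearMap.map_smul, smul_eq_mul]
    field_simp
  set m₀ := (c * (ℓ m₁)⁻¹) • m₁ with hm₀def
  have hm₀ : ℓ m₀ = c := by
    rw [hm₀def, LinearMap.map_smul, smul_eq_mul]
    field_simp
  have e : {m : M // ℓ m = c} ≃ LinearMap.ker ℓ :=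
    { toFun := fun m => ⟨m.1 - m₀, by
        rw [LinearMap.mem_ker, map_sub, m.2, hm₀, sub_self]⟩
      invFun := fun k => ⟨k.1 + m₀, by
        rw [map_add, LinearMap.mem_ker.mp k.2, hm₀, zero_add]⟩
      left_inv := fun m => by ext; simp
      right_inv := fun k => by ext; simp }
  rw [Nat.card_congr e, card_module_eq (F := F)]
  congr 1
  have hrn := LinearMap.finrank_range_add_finrank_ker ℓ
  rw [LinearMap.range_eq_top.mpr hsurj, finrank_top, finrank_self] at hrn
  omega

lemma count_v (A : Matrix (Fin n) (Fin n) F) {r : ℕ} (hr : A.rank = r) (u : Fin n → F)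
    (hu : u ∈ LinearMap.range A.mulVecLin) (hu0 : u ≠ 0) :
    Nat.card {v : Fin n → F //
        (∀ x, A *ᵥ x = 0 → v ⬝ᵥ x = 0) ∧ ∃ x, A *ᵥ x = u ∧ v ⬝ᵥ x = -1}
      = Fintype.card F ^ (r - 1) := by
  classical
  obtain ⟨x, hx⟩ := hu
  rw [Matrix.mulVecLin_apply] at hx
  set W := LinearMap.range Aᵀ.mulVecLin with hWdef
  have hiff : ∀ v : Fin n → F,
      ((∀ y, A *ᵥ y = 0 → v ⬝ᵥ y = 0) ∧ ∃ y, A *ᵥ y = u ∧ v ⬝ᵥ y = -1) ↔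
        (v ∈ W ∧ v ⬝ᵥ x = -1) := by
    intro v
    constructor
    · rintro ⟨h1, y, hy, hvy⟩
      refine ⟨(mem_range_transpose_iff A v).mpr h1, ?_⟩
      have hdiff : A *ᵥ (x - y) = 0 := by
        rw [Matrix.mulVec_sub, hx, hy, sub_self]
      have := h1 _ hdiff
      rw [dotProduct_sub] at this
      have : v ⬝ᵥ x = v ⬝ᵥ y := by linear_combination this
      rw [this, hvy]
    · rintro ⟨hvW, hvx⟩
      exact ⟨(mem_range_transpose_iff A v).mp hvW, x, hx, hvx⟩
  set ℓ : ↥W →ₗ[F] F := ((dotLin n F).flip x).comp W.subtype with hℓdef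
  have hℓ : ∀ m : ↥W, ℓ m = (m : Fin n → F) ⬝ᵥ x := fun m => rfl
  have e : {v : Fin n → F //
        (∀ y, A *ᵥ y = 0 → v ⬝ᵥ y = 0) ∧ ∃ y, A *ᵥ y = u ∧ v ⬝ᵥ y = -1}
      ≃ {m : ↥W // ℓ m = -1} :=
    (Equiv.subtypeEquivRight hiff).trans
    { toFun := fun v => ⟨⟨v.1, v.2.1⟩, v.2.2⟩
      invFun := fun m => ⟨m.1.1, m.1.2, m.2⟩
      left_inv := fun v => rfl
      right_inv := fun m => rfl }
  obtain ⟨i, hi⟩ : ∃ i, u i ≠ 0 := Function.ne_iff.mp hu0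
  have hm₁ : (⟨Aᵀ *ᵥ Pi.single i 1, ⟨Pi.single i 1, rfl⟩⟩ : ↥W) ∈ Set.univ := trivial
  have hlne : ℓ ⟨Aᵀ *ᵥ Pi.single i 1, ⟨Pi.single i 1, rfl⟩⟩ ≠ 0 := by
    rw [hℓ]
    simp only [aux_dot, hx, single_dotProduct, one_mul]
    exact hi
  rw [Nat.card_congr e, card_fiber_eq ℓ _ hlne]
  congr 1
  have : finrank F ↥W = r := by
    rw [hWdef]
    have : Aᵀ.rank = A.rank := A.rank_transpose
    rw [← hr, ← this]
    rfl
  rw [this]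

lemma count_v_zero (A : Matrix (Fin n) (Fin n) F) (u : Fin n → F)
    (hu : ¬(u ∈ LinearMap.range A.mulVecLin ∧ u ≠ 0)) :
    Nat.card {v : Fin n → F //
        (∀ x, A *ᵥ x = 0 → v ⬝ᵥ x = 0) ∧ ∃ x, A *ᵥ x = u ∧ v ⬝ᵥ x = -1} = 0 := by
  have : IsEmpty {v : Fin n → F //
      (∀ x, A *ᵥ x = 0 → v ⬝ᵥ x = 0) ∧ ∃ x, A *ᵥ x = u ∧ v ⬝ᵥ x = -1} := by
    refine ⟨fun v => hu ?_⟩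
    obtain ⟨h1, x, hx, hvx⟩ := v.2
    refine ⟨⟨x, by rw [Matrix.mulVecLin_apply]; exact hx⟩, ?_⟩
    rintro rfl
    have := h1 x hx
    rw [hvx] at this
    exact one_ne_zero (neg_eq_zero.mp this)
  exact Nat.card_of_isEmpty

end Aux



/-- For `A ∈ F_q^{n×n}` of rank `r`, the number of pairs `(u, v)` with
`rank(A + uvᵀ) = r - 1` is `q^{r-1}(q^r - 1)`; i.e. the probability over uniformly
random `u, v` that the rank drops is `D(r) = q^{r-1}(q^r - 1)/q^{2n}`. -/
theorem stmt13 (F : Type) [Field F] [Fintype F] (n r : ℕ) (hn : 0 < n)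
    (A : Matrix (Fin n) (Fin n) F) (hr : A.rank = r) :
    Nat.card {uv : (Fin n → F) × (Fin n → F) //
        ((A + Matrix.vecMulVec uv.1 uv.2).rank : ℤ) = (r : ℤ) - 1} =
      (Fintype.card F) ^ (r - 1) * ((Fintype.card F) ^ r - 1) ∧
    (Nat.card {uv : (Fin n → F) × (Fin n → F) //
        ((A + Matrix.vecMulVec uv.1 uv.2).rank : ℤ) = (r : ℤ) - 1} : ℚ) /
      (Fintype.card F : ℚ) ^ (2 * n) =
      (Fintype.card F : ℚ) ^ ((r : ℤ) - 1) * ((Fintype.card F : ℚ) ^ r - 1) /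
        (Fintype.card F : ℚ) ^ (2 * n) := by

  classical
  have hmain : Nat.card {uv : (Fin n → F) × (Fin n → F) //
      ((A + Matrix.vecMulVec uv.1 uv.2).rank : ℤ) = (r : ℤ) - 1} =
      (Fintype.card F) ^ (r - 1) * ((Fintype.card F) ^ r - 1) := by
    rcases Nat.eq_zero_or_pos r with hr0 | hrpos
    · subst hr0
      have hE : IsEmpty {uv : (Fin n → F) × (Fin n → F) //
          ((A + Matrix.vecMulVec uv.1 uv.2).rank : ℤ) = ((0:ℕ) : ℤ) - 1} := by
        refine ⟨fun uv => ?_⟩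
        have := uv.2
        omega
      rw [Nat.card_of_isEmpty]
      simp
    · have hr1 : 1 ≤ A.rank := by omega
      have hiff : ∀ uv : (Fin n → F) × (Fin n → F),
          (((A + vecMulVec uv.1 uv.2).rank : ℤ) = (r : ℤ) - 1) ↔
            ((∀ x, A *ᵥ x = 0 → uv.2 ⬝ᵥ x = 0) ∧
              ∃ x, A *ᵥ x = uv.1 ∧ uv.2 ⬝ᵥ x = -1) := by
        intro uv
        rw [← rank_drop_iff A uv.1 uv.2 hr1, hr]
        constructor <;> intro h <;> omega
      have e1 : {uv : (Fin n → F) × (Fin n → F) //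
          ((A + Matrix.vecMulVec uv.1 uv.2).rank : ℤ) = (r : ℤ) - 1}
          ≃ Σ u : Fin n → F, {v : Fin n → F //
              (∀ x, A *ᵥ x = 0 → v ⬝ᵥ x = 0) ∧ ∃ x, A *ᵥ x = u ∧ v ⬝ᵥ x = -1} :=
        (Equiv.subtypeEquivRight hiff).trans (Equiv.subtypeProdEquivSigmaSubtype
          (fun u v => (∀ x, A *ᵥ x = 0 → v ⬝ᵥ x = 0) ∧ ∃ x, A *ᵥ x = u ∧ v ⬝ᵥ x = -1))
      rw [Nat.card_congr e1, Nat.card_eq_fintype_card, Fintype.card_sigma]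
      have hterm : ∀ u : Fin n → F, Fintype.card {v : Fin n → F //
            (∀ x, A *ᵥ x = 0 → v ⬝ᵥ x = 0) ∧ ∃ x, A *ᵥ x = u ∧ v ⬝ᵥ x = -1}
          = if u ∈ LinearMap.range A.mulVecLin ∧ u ≠ 0
              then Fintype.card F ^ (r - 1) else 0 := by
        intro u
        rw [← Nat.card_eq_fintype_card]
        split_ifs with h
        · exact count_v A hr u h.1 h.2
        · exact count_v_zero A u h
      rw [Finset.sum_congr rfl fun u _ => hterm u]
      rw [Finset.sum_ite, Finset.sum_const, Finset.sum_const_zero, add_zero, smul_eq_mul]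
      have hfilter : (Finset.univ.filter
            fun u => u ∈ LinearMap.range A.mulVecLin ∧ u ≠ 0).card
          = Fintype.card F ^ r - 1 := by
        rw [← Fintype.card_subtype]
        have e2 : {u : Fin n → F // u ∈ LinearMap.range A.mulVecLin ∧ u ≠ 0}
            ≃ {m : ↥(LinearMap.range A.mulVecLin) // ¬ (m = 0)} :=
          { toFun := fun u => ⟨⟨u.1, u.2.1⟩, fun h => u.2.2 (congrArg Subtype.val h)⟩
            invFun := fun m => ⟨m.1.1, m.1.2, fun h => m.2 (Subtype.ext h)⟩
            left_inv := fun u => rfl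
            right_inv := fun m => rfl }
        rw [Fintype.card_congr e2, Fintype.card_subtype_compl, Fintype.card_subtype_eq]
        have hC : Fintype.card ↥(LinearMap.range A.mulVecLin) = Fintype.card F ^ r := by
          rw [← Nat.card_eq_fintype_card, card_module_eq (F := F)]
          congr 1
        rw [hC]
      rw [hfilter, mul_comm]
  refine ⟨hmain, ?_⟩
  rw [hmain]
  congr 1
  rcases Nat.eq_zero_or_pos r with hr0 | hrpos
  · subst hr0
    norm_num
  · have hzp : ((Fintype.card F : ℚ))^((r:ℤ)-1) = (Fintype.card F : ℚ)^(r-1 : ℕ) := by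
      rw [show (r:ℤ)-1 = ((r-1:ℕ):ℤ) by omega, zpow_natCast]
    have hpow1 : 1 ≤ Fintype.card F ^ r := Nat.one_le_pow _ _ Fintype.card_pos
    rw [hzp, Nat.cast_mul, Nat.cast_sub hpow1, Nat.cast_pow, Nat.cast_pow, Nat.cast_one]
end

section
/- Let q be a prime power, n a positive integer, A ∈ F_q^{n×n} a matrix of rank r, and for uniformly random u, v ∈ F_q^n let D(r), U(r), N(r) denote respectively the probabilities that rank(A + u v^T) equals r − 1, r + 1, and r. Then N(r) = 1 − D(r) − U(r) ≥ (2q^n − 1)/q^{2n}, with equality when r = 0. -/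
/-!
A rank-one update `uvᵀ` changes the rank by at most one, so the three events partition the
`q^{2n}` pairs `(u, v)` and `N = 1 - D - U`. When `u = 0` or `v = 0` the update vanishes and the
rank stays `r`; these `2qⁿ - 1` pairs give the lower bound on `N`, and for `A = 0` they are exactly
the pairs with `rank (uvᵀ) = 0`.
-/

open Matrix

theorem Nat.card_fst_eq_zero_or_snd_eq_zero_add_one {α β : Type*} [Zero α] [Zero β]
    [Finite α] [Finite β] :
    Nat.card {p : α × β // p.1 = 0 ∨ p.2 = 0} + 1 = Nat.card α + Nat.card β := by
  classical
  have := Fintype.ofFinite α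
  have := Fintype.ofFinite β
  have hunion : Finset.univ.filter (fun p : α × β => p.1 = 0 ∨ p.2 = 0) =
      ({0} ×ˢ Finset.univ) ∪ (Finset.univ ×ˢ {0}) := by
    ext; simp only [Finset.mem_filter, Finset.mem_union, Finset.mem_product, Finset.mem_singleton,
      Finset.mem_univ, true_and, and_true]
  have hinter : ({0} ×ˢ Finset.univ) ∩ (Finset.univ ×ˢ {0}) = {((0 : α), (0 : β))} := by
    ext; simp only [Finset.mem_inter, Finset.mem_product, Finset.mem_singleton,
      Finset.mem_univ, true_and, and_true, Prod.ext_iff]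
  have hcard := Finset.card_union_add_card_inter ({(0 : α)} ×ˢ (Finset.univ : Finset β))
    (Finset.univ ×ˢ {(0 : β)})
  rw [hinter, Finset.card_singleton, ← hunion, Finset.card_product, Finset.card_product] at hcard
  simpa [Nat.card_eq_fintype_card, Fintype.card_subtype, add_comm] using hcard

theorem Nat.card_pred_add_card_add_card_succ {α : Type*} [Finite α] (f : α → ℕ) (r : ℕ)
    (hf : ∀ a, f a ≤ r + 1 ∧ r ≤ f a + 1) :
    Nat.card {a // (f a : ℤ) = r - 1} + Nat.card {a // f a = r} + Nat.card {a // f a = r + 1} =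
      Nat.card α := by
  classical
  have := Fintype.ofFinite α
  simp only [Nat.card_eq_fintype_card, Fintype.card_subtype, Finset.card_filter,
    ← Finset.sum_add_distrib]
  rw [Fintype.card_eq_sum_ones]
  refine Finset.sum_congr rfl fun a _ => ?_
  have hfa := hf a
  split_ifs <;> omega

namespace Matrix

variable {m n K : Type*} [Fintype n] [Field K]

theorem rank_add_le (A B : Matrix m n K) : (A + B).rank ≤ A.rank + B.rank := by
  rw [rank, rank, rank, mulVecLin_add]
  exact (Submodule.finrank_mono (LinearMap.range_add_le _ _)).trans
    (Submodule.finrank_add_le_finrank_add_finrank _ _)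

theorem rank_eq_zero_iff {A : Matrix m n K} : A.rank = 0 ↔ A = 0 := by
  refine ⟨fun h => ?_, fun h => h ▸ rank_zero⟩
  rw [rank, Submodule.finrank_eq_zero, LinearMap.range_eq_bot] at h
  classical
  ext i j
  simpa using congrFun (LinearMap.congr_fun h (Pi.single j 1)) i

theorem rank_add_vecMulVec_le_s15 (A : Matrix m n K) (u : m → K) (v : n → K) :
    (A + vecMulVec u v).rank ≤ A.rank + 1 :=
  (rank_add_le _ _).trans (Nat.add_le_add_left (rank_vecMulVec_le u v) _)

theorem rank_le_rank_add_vecMulVec_add_one_s15 (A : Matrix m n K) (u : m → K) (v : n → K) :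
    A.rank ≤ (A + vecMulVec u v).rank + 1 := by
  simpa [neg_vecMulVec] using rank_add_vecMulVec_le_s15 (A + vecMulVec u v) (-u) v

theorem card_fst_eq_zero_or_snd_eq_zero_le_card_rank_add_vecMulVec_eq [Finite K]
    (A : Matrix n n K) :
    Nat.card {uv : (n → K) × (n → K) // uv.1 = 0 ∨ uv.2 = 0} ≤
      Nat.card {uv : (n → K) × (n → K) // (A + vecMulVec uv.1 uv.2).rank = A.rank} :=
  Nat.card_le_card_of_injective
    (fun uv => ⟨uv.1, by rw [vecMulVec_eq_zero.mpr uv.2, add_zero]⟩)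
    fun _ _ h => Subtype.ext (Subtype.mk.inj h)

theorem card_rank_vecMulVec_eq_zero :
    Nat.card {uv : (n → K) × (n → K) // (vecMulVec uv.1 uv.2).rank = 0} =
      Nat.card {uv : (n → K) × (n → K) // uv.1 = 0 ∨ uv.2 = 0} :=
  Nat.card_congr <| Equiv.subtypeEquivRight fun _ => rank_eq_zero_iff.trans vecMulVec_eq_zero

end Matrix

theorem stmt15_general (F : Type) [Field F] [Fintype F] (n r : ℕ)
    (A : Matrix (Fin n) (Fin n) F) (hr : A.rank = r)
    (D U N : ℚ)
    (hD : D = (Nat.card {uv : (Fin n → F) × (Fin n → F) //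
        ((A + Matrix.vecMulVec uv.1 uv.2).rank : ℤ) = (r : ℤ) - 1} : ℚ) /
        (Fintype.card F : ℚ) ^ (2 * n))
    (hU : U = (Nat.card {uv : (Fin n → F) × (Fin n → F) //
        (A + Matrix.vecMulVec uv.1 uv.2).rank = r + 1} : ℚ) /
        (Fintype.card F : ℚ) ^ (2 * n))
    (hN : N = (Nat.card {uv : (Fin n → F) × (Fin n → F) //
        (A + Matrix.vecMulVec uv.1 uv.2).rank = r} : ℚ) /
        (Fintype.card F : ℚ) ^ (2 * n)) :
    N = 1 - D - U ∧
    (2 * (Fintype.card F : ℚ) ^ n - 1) / (Fintype.card F : ℚ) ^ (2 * n) ≤ N ∧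
    (r = 0 → N = (2 * (Fintype.card F : ℚ) ^ n - 1) / (Fintype.card F : ℚ) ^ (2 * n)) := by
  have hcard : Nat.card (Fin n → F) = Fintype.card F ^ n := by simp
  have hpos : (0 : ℚ) < (Fintype.card F : ℚ) ^ (2 * n) := by positivity
  have hpartition := Nat.card_pred_add_card_add_card_succ
    (fun uv : (Fin n → F) × (Fin n → F) => (A + vecMulVec uv.1 uv.2).rank) r fun uv =>
      hr ▸ ⟨A.rank_add_vecMulVec_le_s15 uv.1 uv.2, A.rank_le_rank_add_vecMulVec_add_one_s15 uv.1 uv.2⟩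
  rw [Nat.card_prod, hcard, ← pow_add, ← two_mul] at hpartition
  have hzero : (Nat.card {uv : (Fin n → F) × (Fin n → F) // uv.1 = 0 ∨ uv.2 = 0} : ℚ) =
      2 * (Fintype.card F : ℚ) ^ n - 1 := by
    have := Nat.card_fst_eq_zero_or_snd_eq_zero_add_one (α := Fin n → F) (β := Fin n → F)
    rw [hcard, ← two_mul] at this
    rw [eq_sub_iff_add_eq]
    exact_mod_cast this
  refine ⟨?_, ?_, fun hr0 => ?_⟩
  · rw [hD, hU, hN]
    field_simp
    have := congrArg (Nat.cast : ℕ → ℚ) hpartition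
    push_cast at this
    linarith
  · rw [hN, ← hzero, ← hr]
    gcongr
    exact A.card_fst_eq_zero_or_snd_eq_zero_le_card_rank_add_vecMulVec_eq
  · obtain rfl : A = 0 := rank_eq_zero_iff.mp (hr.trans hr0)
    simp only [hN, hr0, zero_add, card_rank_vecMulVec_eq_zero, hzero]

/-- For `A ∈ F_q^{n×n}` of rank `r`, with `D, U, N` the probabilities over uniformly
random `u, v ∈ F_q^n` that `rank(A + uvᵀ)` equals `r - 1`, `r + 1`, `r` respectively:
`N = 1 - D - U ≥ (2qⁿ - 1)/q^{2n}`, with equality when `r = 0`. -/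
theorem stmt15 (F : Type) [Field F] [Fintype F] (n r : ℕ) (hn : 0 < n)
    (A : Matrix (Fin n) (Fin n) F) (hr : A.rank = r)
    (D U N : ℚ)
    (hD : D = (Nat.card {uv : (Fin n → F) × (Fin n → F) //
        ((A + Matrix.vecMulVec uv.1 uv.2).rank : ℤ) = (r : ℤ) - 1} : ℚ) /
        (Fintype.card F : ℚ) ^ (2 * n))
    (hU : U = (Nat.card {uv : (Fin n → F) × (Fin n → F) //
        (A + Matrix.vecMulVec uv.1 uv.2).rank = r + 1} : ℚ) /
        (Fintype.card F : ℚ) ^ (2 * n))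
    (hN : N = (Nat.card {uv : (Fin n → F) × (Fin n → F) //
        (A + Matrix.vecMulVec uv.1 uv.2).rank = r} : ℚ) /
        (Fintype.card F : ℚ) ^ (2 * n)) :
    N = 1 - D - U ∧
    (2 * (Fintype.card F : ℚ) ^ n - 1) / (Fintype.card F : ℚ) ^ (2 * n) ≤ N ∧
    (r = 0 → N = (2 * (Fintype.card F : ℚ) ^ n - 1) / (Fintype.card F : ℚ) ^ (2 * n)) :=
  stmt15_general F n r A hr D U N hD hU hN
end
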